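/- arXiv:1905.00291 — 6 statements merged into one kernel-verified Lean document; each statement's English description precedes it below -/
import Mathlib

section
/- There exist absolute constants C ≥ 1 and c ≥ 1 such that for every odd prime p, every λ ∈ F_p with λ ≠ 0 and all finite sets A, B, C, D ⊆ F_p one has I_λ(A,B,C,D) − |A||B||C||D|/p ≤ C (log p)^c ( |D|^{1/2} |B||C| + |A| |D|^{1/2} (|B||C|)^{1/3} ( |B|^{1/3} E⁺(C)^{1/6} + |C|^{1/3} E⁺(B)^{1/6} ) ). -/
/-! The main term plays no role: `I_λ` itself is bounded by the second summand. Every solution has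
`a + b = λ / (c + d)`, so `I_λ ≤ ∑ᵤ r_{A+B}(u) r_{C+D}(λ / u)`, and as `u ↦ λ / u` is a bijection,
Cauchy–Schwarz gives `I_λ² ≤ E⁺(A,B) E⁺(C,D)`. With `E⁺(A,B) ≤ |A|²|B|`,
`E⁺(C,D)² ≤ E⁺(C) E⁺(D) ≤ E⁺(C) |D|³` and the trivial `I_λ ≤ |A||B||C|` this yields
`I_λ⁶ ≤ |A|⁶|B|⁴|C|²|D|³ E⁺(C)`; finally `log p ≥ 1` since `p ≥ 3`. -/

open Finset

/-- The number of quadruples `(a,b,c,d) ∈ A×B×C×D` with `(a+b)(c+d) = λ` in `F_p`. -/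
def hypCount (p : ℕ) (lam : ZMod p) (A B C D : Finset (ZMod p)) : ℕ :=
  (((A ×ˢ B) ×ˢ (C ×ˢ D)).filter fun x => (x.1.1 + x.1.2) * (x.2.1 + x.2.2) = lam).card

/-- Common additive energy `E⁺(X,Y) = #{(x₁,x₂,y₁,y₂) ∈ X×X×Y×Y : x₁+y₁ = x₂+y₂}`. -/
def addEnergy (p : ℕ) (X Y : Finset (ZMod p)) : ℕ :=
  (((X ×ˢ X) ×ˢ (Y ×ˢ Y)).filter fun t => t.1.1 + t.2.1 = t.1.2 + t.2.2).card

open scoped Combinatorics.Additive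

lemma Finset.card_filter_product_eq_sum_mul {α β γ : Type*} [Fintype γ] [DecidableEq γ]
    (s : Finset α) (t : Finset β) (f : α → γ) (g : β → γ) :
    #{x ∈ s ×ˢ t | f x.1 = g x.2} = ∑ c, #{a ∈ s | f a = c} * #{b ∈ t | g b = c} := by
  rw [card_eq_sum_card_fiberwise (f := fun x => f x.1) (t := univ) fun _ _ => mem_univ _]
  refine sum_congr rfl fun c _ => ?_
  rw [filter_filter, ← card_product, ← filter_product]
  congr 1
  refine filter_congr fun x _ => ?_
  constructor
  · rintro ⟨h, rfl⟩; exact ⟨rfl, h.symm⟩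
  · rintro ⟨rfl, h⟩; exact ⟨h.symm, rfl⟩

lemma Finset.card_filter_product_apply_eq_le {α β γ : Type*} [DecidableEq γ] {f : α → β → γ}
    (hf : ∀ a, Function.Injective (f a)) (s : Finset α) (t : Finset β) (c : γ) :
    #{x ∈ s ×ˢ t | f x.1 x.2 = c} ≤ #s := by
  refine card_le_card_of_injOn Prod.fst (fun x hx => ?_) fun x hx y hy hxy => ?_
  · exact (mem_product.1 (mem_filter.1 hx).1).1
  · have hx := (mem_filter.1 hx).2
    have hy := (mem_filter.1 hy).2
    rw [hxy] at hx
    exact Prod.ext hxy (hf _ (hx.trans hy.symm))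

lemma Finset.sum_card_filter_product_apply_eq {α β γ : Type*} [Fintype γ] [DecidableEq γ]
    (f : α → β → γ) (s : Finset α) (t : Finset β) :
    ∑ c, #{x ∈ s ×ˢ t | f x.1 x.2 = c} = #s * #t := by
  rw [← card_product, card_eq_sum_card_fiberwise fun x _ => mem_univ (f x.1 x.2)]

section AddCommGroup

variable {α : Type*} [AddCommGroup α] [Fintype α] [DecidableEq α]

lemma Finset.addEnergy_eq_sum_card_sub_mul (s t : Finset α) :
    E[s, t] = ∑ x, #{q ∈ s ×ˢ s | q.1 - q.2 = x} * #{q ∈ t ×ˢ t | q.1 - q.2 = x} := by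
  have flip (x : α) : #{q ∈ t ×ˢ t | q.2 - q.1 = x} = #{q ∈ t ×ˢ t | q.1 - q.2 = x} :=
    card_equiv (Equiv.prodComm _ _) fun q => by simp [and_comm]
  simp_rw [← flip, ← card_filter_product_eq_sum_mul]
  refine congrArg card (filter_congr fun q _ => ?_)
  rw [sub_eq_sub_iff_add_eq_add, add_comm q.2.2]

lemma Finset.addEnergy_sq_le_mul (s t : Finset α) : E[s, t] ^ 2 ≤ E[s] * E[t] := by
  simp_rw [addEnergy_eq_sum_card_sub_mul, ← sq]
  exact sum_mul_sq_le_sq_mul_sq _ _ _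

lemma Finset.addEnergy_le_card_sq_mul_card (s t : Finset α) : E[s, t] ≤ #s ^ 2 * #t :=
  calc E[s, t] = ∑ x, #{q ∈ s ×ˢ s | q.1 - q.2 = x} * #{q ∈ t ×ˢ t | q.1 - q.2 = x} :=
        addEnergy_eq_sum_card_sub_mul s t
    _ ≤ ∑ x, #{q ∈ s ×ˢ s | q.1 - q.2 = x} * #t := by
        gcongr with x
        exact card_filter_product_apply_eq_le (f := (· - ·)) (fun _ => sub_right_injective) t t x
    _ = #s ^ 2 * #t := by
        rw [← sum_mul, sum_card_filter_product_apply_eq (· - ·), sq]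

end AddCommGroup

section Hyperbola

variable {p : ℕ} [Fact p.Prime] {lam : ZMod p}

-- Not an equality: since `λ / 0 = 0`, the right side also counts `a + b = c + d = 0`.
lemma hypCount_le_sum (hlam : lam ≠ 0) (A B C D : Finset (ZMod p)) :
    hypCount p lam A B C D ≤
      ∑ u, #{x ∈ A ×ˢ B | x.1 + x.2 = u} * #{y ∈ C ×ˢ D | y.1 + y.2 = lam / u} := by
  have fiber (u : ZMod p) :
      #{y ∈ C ×ˢ D | lam / (y.1 + y.2) = u} = #{y ∈ C ×ˢ D | y.1 + y.2 = lam / u} :=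
    congrArg card <| filter_congr fun y _ =>
      ⟨fun h => h ▸ (div_div_cancel₀ hlam).symm, fun h => h ▸ div_div_cancel₀ hlam⟩
  simp_rw [← fiber, ← card_filter_product_eq_sum_mul]
  refine card_le_card (monotone_filter_right _ fun x _ hx => ?_)
  exact eq_div_of_mul_eq (right_ne_zero_of_mul (hx.symm ▸ hlam)) hx

lemma hypCount_le_card_mul_card_mul_card (hlam : lam ≠ 0) (A B C D : Finset (ZMod p)) :
    hypCount p lam A B C D ≤ #A * #B * #C :=
  calc hypCount p lam A B C D
      ≤ ∑ u, #{x ∈ A ×ˢ B | x.1 + x.2 = u} * #{y ∈ C ×ˢ D | y.1 + y.2 = lam / u} :=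
        hypCount_le_sum hlam A B C D
    _ ≤ ∑ u, #{x ∈ A ×ˢ B | x.1 + x.2 = u} * #C := by
        gcongr with u
        exact card_filter_product_apply_eq_le (f := (· + ·)) (fun _ => add_right_injective _) _ _ _
    _ = #A * #B * #C := by rw [← sum_mul, sum_card_filter_product_apply_eq (· + ·)]

lemma hypCount_sq_le_addEnergy_mul (hlam : lam ≠ 0) (A B C D : Finset (ZMod p)) :
    hypCount p lam A B C D ^ 2 ≤ E[A, B] * E[C, D] :=
  calc hypCount p lam A B C D ^ 2
      ≤ (∑ u, #{x ∈ A ×ˢ B | x.1 + x.2 = u} * #{y ∈ C ×ˢ D | y.1 + y.2 = lam / u}) ^ 2 := by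
        gcongr; exact hypCount_le_sum hlam A B C D
    _ ≤ (∑ u, #{x ∈ A ×ˢ B | x.1 + x.2 = u} ^ 2) *
          ∑ u, #{y ∈ C ×ˢ D | y.1 + y.2 = lam / u} ^ 2 := sum_mul_sq_le_sq_mul_sq _ _ _
    _ = E[A, B] * E[C, D] := by
        rw [addEnergy_eq_sum_sq, addEnergy_eq_sum_sq C D,
          (Function.Involutive.bijective (f := (lam / ·)) fun u => div_div_cancel₀ hlam).sum_comp
            fun v => #{y ∈ C ×ˢ D | y.1 + y.2 = v} ^ 2]

lemma hypCount_pow_six_le (hlam : lam ≠ 0) (A B C D : Finset (ZMod p)) :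
    hypCount p lam A B C D ^ 6 ≤ #A ^ 6 * #B ^ 4 * #C ^ 2 * #D ^ 3 * E[C] :=
  calc hypCount p lam A B C D ^ 6
      = (hypCount p lam A B C D ^ 2) ^ 2 * hypCount p lam A B C D ^ 2 := by ring
    _ ≤ (E[A, B] * E[C, D]) ^ 2 * (#A * #B * #C) ^ 2 := by
        gcongr
        exacts [hypCount_sq_le_addEnergy_mul hlam A B C D,
          hypCount_le_card_mul_card_mul_card hlam A B C D]
    _ = E[A, B] ^ 2 * E[C, D] ^ 2 * (#A * #B * #C) ^ 2 := by ring
    _ ≤ (#A ^ 2 * #B) ^ 2 * (E[C] * (#D ^ 2 * #D)) * (#A * #B * #C) ^ 2 := by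
        gcongr
        · exact addEnergy_le_card_sq_mul_card A B
        · exact (addEnergy_sq_le_mul C D).trans (by gcongr; exact addEnergy_le_card_sq_mul_card D D)
    _ = #A ^ 6 * #B ^ 4 * #C ^ 2 * #D ^ 3 * E[C] := by ring

end Hyperbola

lemma Real.rpow_one_div_natCast_pow_mul {x : ℝ} (hx : 0 ≤ x) {k : ℕ} (hk : k ≠ 0) (m : ℕ) :
    (x ^ ((1 : ℝ) / k)) ^ (k * m) = x ^ m := by
  rw [pow_mul, one_div, Real.rpow_inv_natCast_pow hx hk]

lemma hypCount_le_rpow {p : ℕ} [Fact p.Prime] {lam : ZMod p} (hlam : lam ≠ 0)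
    (A B C D : Finset (ZMod p)) :
    (hypCount p lam A B C D : ℝ) ≤
      #A * (#D : ℝ) ^ ((1 : ℝ) / 2) * ((#B : ℝ) * #C) ^ ((1 : ℝ) / 3) *
        ((#B : ℝ) ^ ((1 : ℝ) / 3) * (E[C] : ℝ) ^ ((1 : ℝ) / 6)) := by
  refine le_of_pow_le_pow_left₀ (n := 6) (by norm_num) (by positivity) ?_
  have hD := Real.rpow_one_div_natCast_pow_mul (Nat.cast_nonneg' #D) (k := 2) two_ne_zero 3
  have hBC := Real.rpow_one_div_natCast_pow_mul (by positivity : (0 : ℝ) ≤ #B * #C)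
    (k := 3) three_ne_zero 2
  have hB := Real.rpow_one_div_natCast_pow_mul (Nat.cast_nonneg' #B) (k := 3) three_ne_zero 2
  have hE := Real.rpow_one_div_natCast_pow_mul (Nat.cast_nonneg' E[C]) (k := 6) (by norm_num) 1
  push_cast at hD hBC hB hE
  calc (hypCount p lam A B C D : ℝ) ^ 6
      ≤ (#A : ℝ) ^ 6 * (#B : ℝ) ^ 4 * (#C : ℝ) ^ 2 * (#D : ℝ) ^ 3 * E[C] := by
        exact_mod_cast hypCount_pow_six_le hlam A B C D
    _ = _ := by
        rw [mul_pow, mul_pow, mul_pow, mul_pow, hD, hBC, hB, hE]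
        ring

lemma Real.one_le_log_of_three_le {x : ℝ} (hx : 3 ≤ x) : 1 ≤ Real.log x := by
  rw [Real.le_log_iff_exp_le (by linarith)]
  exact Real.exp_one_lt_three.le.trans hx

theorem stmt1 :
    ∃ C c : ℝ, 1 ≤ C ∧ 1 ≤ c ∧
      ∀ (p : ℕ), p.Prime → Odd p →
        ∀ (lam : ZMod p), lam ≠ 0 →
          ∀ A B Cs D : Finset (ZMod p),
            (hypCount p lam A B Cs D : ℝ) -
                (A.card : ℝ) * B.card * Cs.card * D.card / p ≤
              C * Real.log p ^ c *
                ((D.card : ℝ) ^ ((1 : ℝ) / 2) * B.card * Cs.card +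
                  (A.card : ℝ) * (D.card : ℝ) ^ ((1 : ℝ) / 2) *
                    ((B.card : ℝ) * Cs.card) ^ ((1 : ℝ) / 3) *
                    ((B.card : ℝ) ^ ((1 : ℝ) / 3) *
                        (addEnergy p Cs Cs : ℝ) ^ ((1 : ℝ) / 6) +
                      (Cs.card : ℝ) ^ ((1 : ℝ) / 3) *
                        (addEnergy p B B : ℝ) ^ ((1 : ℝ) / 6))) := by
  refine ⟨1, 1, le_rfl, le_rfl, fun p hp hodd lam hlam A B Cs D => ?_⟩
  have : Fact p.Prime := ⟨hp⟩
  have hlog : 1 ≤ Real.log p := by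
    obtain ⟨k, rfl⟩ := hodd
    have := hp.two_le
    exact Real.one_le_log_of_three_le (by norm_cast; omega)
  set X := (A.card : ℝ) * (D.card : ℝ) ^ ((1 : ℝ) / 2) * ((B.card : ℝ) * Cs.card) ^ ((1 : ℝ) / 3)
  calc (hypCount p lam A B Cs D : ℝ) - (A.card : ℝ) * B.card * Cs.card * D.card / p
      ≤ hypCount p lam A B Cs D := sub_le_self _ (by positivity)
    _ ≤ X * ((B.card : ℝ) ^ ((1 : ℝ) / 3) * (addEnergy p Cs Cs : ℝ) ^ ((1 : ℝ) / 6)) :=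
        hypCount_le_rpow hlam A B Cs D
    _ ≤ _ := by
        rw [Real.rpow_one, one_mul]
        refine le_mul_of_one_le_left (by positivity) hlog |>.trans' ?_
        refine le_add_of_nonneg_of_le (by positivity) ?_
        gcongr
        exact le_add_of_nonneg_right (by positivity)
end

section
/- Let 𝔾 be a finite group and k ≥ 2 an integer. Then for all functions f, g : 𝔾 → ℂ one has the triangle inequality T_k(f+g)^{1/(2k)} ≤ T_k(f)^{1/(2k)} + T_k(g)^{1/(2k)}, and moreover T_k(f)^{1/(2k)} ≥ (Σ_{x ∈ 𝔾} |f(x)|^{2k})^{1/(2k)}. -/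
open Finset

/-- Alternating product `g₁ g₂⁻¹ g₃ g₄⁻¹ ⋯` (exponent `+1` at odd positions,
`−1` at even positions, 1-indexed). -/
def altProd {M : Type*} [Monoid M] [Inv M] {k : ℕ} (g : Fin k → M) : M :=
  (List.ofFn fun i : Fin k => if (i : ℕ) % 2 = 0 then g i else (g i)⁻¹).prod

/-- `W_{h₁,…,h_k}(x)`: the sum over tuples with alternating product `x` of the product of
`h_j(g_j)` at odd positions and `conj(h_j(g_j))` at even positions (1-indexed). -/
noncomputable def Wfun {G : Type*} [Group G] [Fintype G] [DecidableEq G] {k : ℕ}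
    (h : Fin k → G → ℂ) (x : G) : ℂ :=
  ∑ t : Fin k → G,
    if altProd t = x then
      ∏ i : Fin k, (if (i : ℕ) % 2 = 0 then h i (t i) else (starRingEnd ℂ) (h i (t i)))
    else 0

/-- `T_k(f) = Σ_x |W_{f,…,f}(x)|²`. -/
noncomputable def TkF1 {G : Type*} [Group G] [Fintype G] [DecidableEq G] (k : ℕ)
    (f : G → ℂ) : ℝ :=
  ∑ x : G, ‖Wfun (fun _ : Fin k => f) x‖ ^ 2

/-!
Let `L = (f (x * y⁻¹))_{x,y}` be the matrix of convolution by `f`. Convolution becomes matrix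
multiplication and `a ↦ conj (f a⁻¹)` becomes the adjoint, so the matrix `w` of `W_{f,…,f}` is
the alternating word `L L* L ⋯` with `k` letters. Each row of `w` has squared norm `T_k(f)` and
`w w* = (L L*)^k`, hence `|G| T_k(f) = tr ((L L*)^k) = ‖L‖_{S_{2k}}^{2k}`.

Both claims are then facts about the Schatten `2k`-norm. For positive semidefinite `X`,
`(X i i)^k ≤ (X^k) i i` by Jensen in an eigenbasis, so `Σ_i ‖row_i M‖^{2k} ≤ ‖M‖_{S_{2k}}^{2k}`,
with equality when the rows of `M` are orthogonal. After a unitary rotation making the rows of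
`A + B` orthogonal, Minkowski's inequality in `ℓ^{2k}` for the row norms gives the triangle
inequality. Every row of `L` has squared norm `Σ_x |f x|²`, which gives the lower bound.
-/

open scoped ComplexOrder

namespace Matrix

variable {𝕜 : Type*} [RCLike 𝕜] {m n : Type*} [Fintype n]

noncomputable def rowNorm (A : Matrix m n 𝕜) (i : m) : ℝ :=
  ‖(WithLp.toLp 2 (A i) : EuclideanSpace 𝕜 n)‖

lemma rowNorm_nonneg (A : Matrix m n 𝕜) (i : m) : 0 ≤ rowNorm A i := norm_nonneg _

lemma rowNorm_add_le (A B : Matrix m n 𝕜) (i : m) :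
    rowNorm (A + B) i ≤ rowNorm A i + rowNorm B i := by
  change ‖WithLp.toLp 2 (A i + B i)‖ ≤ _
  rw [WithLp.toLp_add]
  exact norm_add_le _ _

lemma mul_conjTranspose_self_apply_self (A : Matrix m n 𝕜) (i : m) :
    (A * Aᴴ) i i = ((rowNorm A i ^ 2 : ℝ) : 𝕜) := by
  simp [rowNorm, EuclideanSpace.norm_sq_eq, mul_apply, RCLike.mul_conj]

lemma re_mul_diagonal_mul_conjTranspose_apply_self [DecidableEq n] (U : Matrix m n 𝕜)
    (d : n → ℝ) (i : m) :
    RCLike.re ((U * diagonal (fun j => (d j : 𝕜)) * Uᴴ : Matrix m m 𝕜) i i) =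
      ∑ j, ‖U i j‖ ^ 2 * d j := by
  rw [mul_apply, map_sum]
  refine sum_congr rfl fun j _ => ?_
  rw [mul_diagonal, conjTranspose_apply, RCLike.star_def, mul_right_comm, RCLike.mul_conj,
    ← RCLike.ofReal_pow, ← RCLike.ofReal_mul, RCLike.ofReal_re]

section Hermitian

variable [DecidableEq n]

lemma sum_norm_sq_apply_eq_one [DecidableEq m] {U : Matrix m n 𝕜} (hU : U * Uᴴ = 1) (i : m) :
    ∑ j, ‖U i j‖ ^ 2 = 1 := by
  have h := re_mul_diagonal_mul_conjTranspose_apply_self U 1 i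
  simp only [Pi.one_apply, RCLike.ofReal_one, mul_one, diagonal_one, Matrix.mul_one, hU,
    one_apply_eq, RCLike.one_re] at h
  exact h.symm

lemma IsHermitian.pow_eq {X : Matrix n n 𝕜} (hX : X.IsHermitian) (k : ℕ) :
    X ^ k = (hX.eigenvectorUnitary : Matrix n n 𝕜) *
      diagonal (fun j => ((hX.eigenvalues j ^ k : ℝ) : 𝕜)) *
      (hX.eigenvectorUnitary : Matrix n n 𝕜)ᴴ := by
  conv_lhs => rw [hX.spectral_theorem]
  rw [← map_pow, diagonal_pow, Unitary.conjStarAlgAut_apply, star_eq_conjTranspose]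
  congr
  ext j
  simp

lemma PosSemidef.re_apply_self_pow_le {X : Matrix n n 𝕜} (hX : X.PosSemidef) (k : ℕ) (i : n) :
    RCLike.re (X i i) ^ k ≤ RCLike.re ((X ^ k) i i) := by
  have hH := hX.isHermitian
  set U : Matrix n n 𝕜 := (hH.eigenvectorUnitary : Matrix n n 𝕜)
  have hU : U * Uᴴ = 1 := by simp [U, ← star_eq_conjTranspose]
  have hX1 := congrArg (fun M : Matrix n n 𝕜 => RCLike.re (M i i)) (hH.pow_eq 1)
  simp only [pow_one, re_mul_diagonal_mul_conjTranspose_apply_self] at hX1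
  rw [hX1, hH.pow_eq, re_mul_diagonal_mul_conjTranspose_apply_self]
  exact Real.pow_arith_mean_le_arith_mean_pow univ _ _ (fun _ _ => sq_nonneg _)
    (sum_norm_sq_apply_eq_one hU i) (fun j _ => hX.eigenvalues_nonneg j) k

end Hermitian

section Schatten

variable [Fintype m] [DecidableEq m]

/-- `‖A‖_{S_{2k}}^{2k}`, the sum of the `2k`-th powers of the singular values of `A`. -/
noncomputable def schattenPow (k : ℕ) (A : Matrix m n 𝕜) : ℝ :=
  RCLike.re ((A * Aᴴ) ^ k).trace

lemma sum_rowNorm_pow_le_schattenPow (k : ℕ) (A : Matrix m n 𝕜) :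
    ∑ i, rowNorm A i ^ (2 * k) ≤ schattenPow k A := by
  rw [schattenPow, trace, map_sum]
  refine sum_le_sum fun i _ => ?_
  calc rowNorm A i ^ (2 * k) = RCLike.re ((A * Aᴴ) i i) ^ k := by
        rw [mul_conjTranspose_self_apply_self, RCLike.ofReal_re, pow_mul]
    _ ≤ _ := (posSemidef_self_mul_conjTranspose A).re_apply_self_pow_le k i

lemma schattenPow_nonneg (k : ℕ) (A : Matrix m n 𝕜) : 0 ≤ schattenPow k A :=
  (sum_nonneg fun i _ => pow_nonneg (rowNorm_nonneg A i) _).trans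
    (sum_rowNorm_pow_le_schattenPow k A)

lemma schattenPow_unitary_mul (k : ℕ) (U : unitary (Matrix m m 𝕜)) (A : Matrix m n 𝕜) :
    schattenPow k ((U : Matrix m m 𝕜) * A) = schattenPow k A := by
  have hconj : (U : Matrix m m 𝕜) * A * ((U : Matrix m m 𝕜) * A)ᴴ =
      Unitary.conjStarAlgAut 𝕜 _ U (A * Aᴴ) := by
    rw [Unitary.conjStarAlgAut_apply, conjTranspose_mul, star_eq_conjTranspose]
    simp only [Matrix.mul_assoc]
  rw [schattenPow, schattenPow, hconj, ← map_pow, Unitary.conjStarAlgAut_apply, trace_mul_cycle,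
    Unitary.coe_star_mul_self, Matrix.one_mul]

lemma schattenPow_eq_sum_rowNorm_pow (k : ℕ) {A : Matrix m n 𝕜} (hA : (A * Aᴴ).IsDiag) :
    schattenPow k A = ∑ i, rowNorm A i ^ (2 * k) := by
  rw [schattenPow, ← hA.diagonal_diag, diagonal_pow, trace_diagonal, map_sum]
  refine sum_congr rfl fun i _ => ?_
  rw [Pi.pow_apply, diag_apply, mul_conjTranspose_self_apply_self, ← RCLike.ofReal_pow,
    RCLike.ofReal_re, pow_mul]

lemma exists_unitary_isDiag_mul_conjTranspose (A : Matrix m n 𝕜) :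
    ∃ U : unitary (Matrix m m 𝕜),
      ((U : Matrix m m 𝕜) * A * ((U : Matrix m m 𝕜) * A)ᴴ).IsDiag := by
  have hH := isHermitian_mul_conjTranspose_self A
  refine ⟨star hH.eigenvectorUnitary, ?_⟩
  have hdiag := hH.conjStarAlgAut_star_eigenvectorUnitary
  rw [Unitary.conjStarAlgAut_star_apply] at hdiag
  rw [conjTranspose_mul, Unitary.coe_star, star_eq_conjTranspose, conjTranspose_conjTranspose]
  simp only [Matrix.mul_assoc, star_eq_conjTranspose] at hdiag ⊢
  rw [hdiag]
  exact isDiag_diagonal _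

lemma schattenPow_add_rpow_le {k : ℕ} (hk : k ≠ 0) (A B : Matrix m n 𝕜) :
    schattenPow k (A + B) ^ (1 / (2 * (k : ℝ))) ≤
      schattenPow k A ^ (1 / (2 * (k : ℝ))) + schattenPow k B ^ (1 / (2 * (k : ℝ))) := by
  obtain ⟨U, hU⟩ := exists_unitary_isDiag_mul_conjTranspose (A + B)
  rw [← schattenPow_unitary_mul k U A, ← schattenPow_unitary_mul k U B,
    ← schattenPow_unitary_mul k U (A + B), schattenPow_eq_sum_rowNorm_pow k hU]
  set V : Matrix m m 𝕜 := (U : Matrix m m 𝕜)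
  set p : ℝ := 2 * k with hp_def
  have hp : 1 ≤ p := by
    have : (1 : ℝ) ≤ k := by exact_mod_cast Nat.one_le_iff_ne_zero.mpr hk
    linarith
  have hrpow (x : ℝ) : x ^ p = x ^ (2 * k) := by
    rw [hp_def]
    exact_mod_cast Real.rpow_natCast x (2 * k)
  have hmono (M : Matrix m n 𝕜) : (∑ i, rowNorm M i ^ p) ^ (1 / p) ≤ schattenPow k M ^ (1 / p) :=
    Real.rpow_le_rpow (sum_nonneg fun i _ => Real.rpow_nonneg (rowNorm_nonneg M i) _)
      (by simpa only [hrpow] using sum_rowNorm_pow_le_schattenPow k M) (by positivity)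
  calc (∑ i, rowNorm (V * (A + B)) i ^ (2 * k)) ^ (1 / p)
      ≤ (∑ i, (rowNorm (V * A) i + rowNorm (V * B) i) ^ p) ^ (1 / p) := by
        simp only [hrpow]
        refine Real.rpow_le_rpow (sum_nonneg fun i _ => pow_nonneg (rowNorm_nonneg _ i) _)
          (sum_le_sum fun i _ => pow_le_pow_left₀ (rowNorm_nonneg _ i) ?_ _) (by positivity)
        rw [Matrix.mul_add]
        exact rowNorm_add_le _ _ i
    _ ≤ (∑ i, rowNorm (V * A) i ^ p) ^ (1 / p) + (∑ i, rowNorm (V * B) i ^ p) ^ (1 / p) :=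
        Real.Lp_add_le_of_nonneg univ hp (fun i _ => rowNorm_nonneg _ i)
          (fun i _ => rowNorm_nonneg _ i)
    _ ≤ schattenPow k (V * A) ^ (1 / p) + schattenPow k (V * B) ^ (1 / p) :=
        add_le_add (hmono _) (hmono _)

end Schatten

end Matrix

lemma Finset.sum_pow_le_pow_sum_of_nonneg {ι R : Type*} [Semiring R] [PartialOrder R]
    [IsOrderedRing R] {s : Finset ι} {f : ι → R}
    (hf : ∀ i ∈ s, 0 ≤ f i) {k : ℕ} (hk : k ≠ 0) :
    ∑ i ∈ s, f i ^ k ≤ (∑ i ∈ s, f i) ^ k := by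
  classical
  induction s using Finset.induction_on with
  | empty => simp [zero_pow hk]
  | insert a s ha ih =>
    rw [sum_insert ha, sum_insert ha]
    have hs := fun i hi => hf i (mem_insert_of_mem hi)
    calc f a ^ k + ∑ i ∈ s, f i ^ k ≤ f a ^ k + (∑ i ∈ s, f i) ^ k := by
          gcongr
          exact ih hs
      _ ≤ (f a + ∑ i ∈ s, f i) ^ k :=
        pow_add_pow_le (hf a (mem_insert_self a s)) (sum_nonneg hs) hk

section AltWord

variable {R : Type*} [Monoid R] [StarMul R]

def altWord (a : R) (k : ℕ) : R :=
  (List.ofFn fun i : Fin k => if (i : ℕ) % 2 = 0 then a else star a).prod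

lemma altWord_succ (a : R) (k : ℕ) : altWord a (k + 1) = a * altWord (star a) k := by
  rw [altWord, List.ofFn_succ, List.prod_cons, altWord]
  congr 3
  funext i
  rcases Nat.mod_two_eq_zero_or_one i with h | h <;>
    simp [Fin.val_succ, Nat.succ_mod_two_eq_zero_iff, h]

lemma altWord_mul_star_altWord (a : R) (k : ℕ) :
    altWord a k * star (altWord a k) = (a * star a) ^ k := by
  induction k generalizing a with
  | zero => simp [altWord]
  | succ k ih =>
    have hsemiconj : SemiconjBy a (star a * a) (a * star a) := (mul_assoc _ _ _).symm
    rw [altWord_succ, star_mul, mul_assoc, ← mul_assoc (altWord _ k), ih, star_star,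
      ← mul_assoc, (hsemiconj.pow_right k).eq, pow_succ, mul_assoc]

end AltWord

section Convolution

open Matrix

variable {G : Type*} [Group G]

def convMatrix (f : G → ℂ) : Matrix G G ℂ := Matrix.of fun x y => f (x * y⁻¹)

lemma convMatrix_add (f g : G → ℂ) : convMatrix (f + g) = convMatrix f + convMatrix g := rfl

lemma conjTranspose_convMatrix (f : G → ℂ) :
    (convMatrix f)ᴴ = convMatrix fun a => starRingEnd ℂ (f a⁻¹) := by
  ext x y
  simp [convMatrix]

variable [Fintype G]

lemma convMatrix_mul_convMatrix (u v : G → ℂ) :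
    convMatrix u * convMatrix v = convMatrix fun x => ∑ y, u y * v (y⁻¹ * x) := by
  ext x z
  simp only [convMatrix, Matrix.mul_apply, Matrix.of_apply]
  refine Fintype.sum_equiv ((Equiv.inv G).trans (Equiv.mulLeft x)) _ _ fun y => ?_
  simp [mul_assoc]

lemma rowNorm_convMatrix_sq (f : G → ℂ) (x : G) :
    (convMatrix f).rowNorm x ^ 2 = ∑ y, ‖f y‖ ^ 2 := by
  rw [Matrix.rowNorm, EuclideanSpace.norm_sq_eq]
  exact Fintype.sum_equiv ((Equiv.inv G).trans (Equiv.mulLeft x)) _ _ fun _ => rfl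

variable [DecidableEq G]

noncomputable def convProd {k : ℕ} (F : Fin k → G → ℂ) (x : G) : ℂ :=
  ∑ t : Fin k → G, if (List.ofFn t).prod = x then ∏ i, F i (t i) else 0

lemma convProd_succ {k : ℕ} (F : Fin (k + 1) → G → ℂ) (x : G) :
    convProd F x = ∑ y, F 0 y * convProd (fun i => F i.succ) (y⁻¹ * x) := by
  rw [convProd, ← (Fin.consEquiv fun _ => G).sum_comp, Fintype.sum_prod_type]
  refine sum_congr rfl fun y _ => ?_
  rw [convProd, mul_sum]
  refine sum_congr rfl fun t _ => ?_
  simp only [Fin.consEquiv_apply, List.ofFn_succ, Fin.cons_zero, Fin.cons_succ, List.prod_cons,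
    Fin.prod_univ_succ, eq_inv_mul_iff_mul_eq, mul_ite, mul_zero]

lemma convMatrix_convProd {k : ℕ} (F : Fin k → G → ℂ) :
    convMatrix (convProd F) = (List.ofFn fun i => convMatrix (F i)).prod := by
  induction k with
  | zero =>
    ext x y
    simp [convMatrix, convProd, Matrix.one_apply, eq_comm, mul_inv_eq_one]
  | succ k ih =>
    rw [List.ofFn_succ, List.prod_cons, ← ih, convMatrix_mul_convMatrix]
    exact congrArg convMatrix (funext (convProd_succ F))

lemma Wfun_eq_convProd {k : ℕ} (h : Fin k → G → ℂ) :
    Wfun h = convProd fun i =>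
      if (i : ℕ) % 2 = 0 then h i else fun a => starRingEnd ℂ (h i a⁻¹) := by
  funext x
  let σ : Equiv.Perm (Fin k → G) := Function.Involutive.toPerm
    (fun t i => if (i : ℕ) % 2 = 0 then t i else (t i)⁻¹)
    (fun t => funext fun i => by by_cases hi : (i : ℕ) % 2 = 0 <;> simp [hi])
  refine Fintype.sum_equiv σ _ _ fun t => ?_
  have hprod : altProd t = (List.ofFn (σ t)).prod := rfl
  rw [hprod]
  congr 1
  refine prod_congr rfl fun i _ => ?_
  by_cases hi : (i : ℕ) % 2 = 0 <;> simp [σ, hi, Function.Involutive.toPerm]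

lemma convMatrix_Wfun (k : ℕ) (f : G → ℂ) :
    convMatrix (Wfun fun _ : Fin k => f) = altWord (convMatrix f) k := by
  rw [Wfun_eq_convProd, convMatrix_convProd, altWord]
  congr 2
  funext i
  split_ifs
  · rfl
  · rw [star_eq_conjTranspose, conjTranspose_convMatrix]

lemma schattenPow_convMatrix (k : ℕ) (f : G → ℂ) :
    (convMatrix f).schattenPow k = Fintype.card G * TkF1 k f := by
  rw [Matrix.schattenPow, ← Matrix.star_eq_conjTranspose, ← altWord_mul_star_altWord,
    ← convMatrix_Wfun, Matrix.star_eq_conjTranspose, Matrix.trace, map_sum]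
  simp only [Matrix.diag_apply, Matrix.mul_conjTranspose_self_apply_self, RCLike.ofReal_re,
    rowNorm_convMatrix_sq, sum_const, card_univ, nsmul_eq_mul, TkF1]

lemma sum_norm_pow_le_TkF1 {k : ℕ} (hk : k ≠ 0) (f : G → ℂ) :
    ∑ x, ‖f x‖ ^ (2 * k) ≤ TkF1 k f := by
  have hG : (0 : ℝ) < Fintype.card G := by exact_mod_cast Fintype.card_pos
  refine le_of_mul_le_mul_left ?_ hG
  calc (Fintype.card G : ℝ) * ∑ x, ‖f x‖ ^ (2 * k)
      ≤ Fintype.card G * (∑ x, ‖f x‖ ^ 2) ^ k := by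
        simp only [pow_mul]
        gcongr
        exact sum_pow_le_pow_sum_of_nonneg (fun x _ => sq_nonneg _) hk
    _ = ∑ x, (convMatrix f).rowNorm x ^ (2 * k) := by
        simp only [pow_mul, rowNorm_convMatrix_sq, sum_const, card_univ, nsmul_eq_mul]
    _ ≤ (convMatrix f).schattenPow k := Matrix.sum_rowNorm_pow_le_schattenPow k _
    _ = Fintype.card G * TkF1 k f := schattenPow_convMatrix k f

end Convolution

theorem stmt8 {G : Type*} [Group G] [Fintype G] [DecidableEq G] (k : ℕ) (hk : 2 ≤ k)
    (f g : G → ℂ) :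
    TkF1 k (f + g) ^ (1 / (2 * (k : ℝ))) ≤
        TkF1 k f ^ (1 / (2 * (k : ℝ))) + TkF1 k g ^ (1 / (2 * (k : ℝ))) ∧
      (∑ x : G, ‖f x‖ ^ (2 * k)) ^ (1 / (2 * (k : ℝ))) ≤
        TkF1 k f ^ (1 / (2 * (k : ℝ))) := by
  have hk0 : k ≠ 0 := by omega
  have hG : (0 : ℝ) ≤ Fintype.card G := Nat.cast_nonneg _
  have hT (u : G → ℂ) : TkF1 k u = (convMatrix u).schattenPow k / Fintype.card G := by
    rw [schattenPow_convMatrix, mul_div_cancel_left₀ _ (by positivity)]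
  refine ⟨?_, Real.rpow_le_rpow (sum_nonneg fun _ _ => by positivity)
    (sum_norm_pow_le_TkF1 hk0 f) (by positivity)⟩
  simp only [hT, convMatrix_add, Real.div_rpow (Matrix.schattenPow_nonneg _ _) hG, ← add_div]
  gcongr
  exact Matrix.schattenPow_add_rpow_le hk0 _ _
end

section
/- Let 𝔾 be a group acting on a set X, let G ⊆ 𝔾 be a finite set, and let f₁, f₂ : X → ℂ be finitely supported functions. Then for every integer k ≥ 1 the quantity Σ_{g ∈ 𝔾} r_{(GG^{−1})^{2^{k−1}}}(g) Σ_{x ∈ X} f₂(x) conjugate(f₂(g·x)) is a nonnegative real number and | Σ_{g ∈ G} Σ_{x ∈ X} f₁(x) f₂(g·x) |^{2^k} ≤ ‖f₁‖₂^{2^k} ‖f₂‖₂^{2^k − 2} · Σ_{g ∈ 𝔾} r_{(GG^{−1})^{2^{k−1}}}(g) Σ_{x ∈ X} f₂(x) conjugate(f₂(g·x)). -/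
/-- `r_{(GG⁻¹)^m}(g)`: the number of tuples `(g₁,…,g_{2m}) ∈ G^{2m}` with
`g₁g₂⁻¹g₃g₄⁻¹⋯g_{2m−1}g_{2m}⁻¹ = g`. -/
noncomputable def rAlt {G : Type*} [Group G] (Gs : Set G) (m : ℕ) (g : G) : ℕ :=
  Nat.card {t : Fin (2 * m) → G // (∀ i, t i ∈ Gs) ∧ altProd t = g}

/-!
Write `F_n(x) = ∑_{u ∈ G^n} f₂(u₁ u₂⁻¹ u₃ ⋯ · x)`. The `r`-weighted sum for `m` is
`∑_{u ∈ G^{2m}} ⟨f₂, f₂(u₁ u₂⁻¹ ⋯ u_{2m}⁻¹ ·)⟩ = ⟨f₂, F_{2m}⟩`, and splitting a `2m`-tuple into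
its first half and its reversed second half turns the same sum into `‖F_m‖₂²`, which is
therefore real and nonnegative. Cauchy–Schwarz gives `‖F_m‖₂⁴ ≤ ‖f₂‖₂² ‖F_{2m}‖₂²`; starting
from `|∑_{g ∈ G} ⟨f₁, f₂(g ·)⟩| ≤ ‖f₁‖₂ ‖F_1‖₂` and doubling `k - 1` times gives the bound.
-/

open Function Finset ComplexConjugate

theorem List.reverse_ofFn {α : Type*} {n : ℕ} (f : Fin n → α) :
    (List.ofFn f).reverse = List.ofFn fun i => f i.rev := by
  refine List.ext_getElem (by simp) fun i _ h => ?_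
  simp only [List.getElem_reverse, List.getElem_ofFn, List.length_ofFn] at h ⊢
  congr 1
  ext
  simp only [Fin.val_rev]
  omega

section AltProd

variable {M : Type*} [Group M]

theorem altProd_one (u : Fin 1 → M) : altProd u = u 0 := by
  simp [altProd]

/-- The entry `r i` sits at position `i` in `altProd r` and at position `2m - 1 - i` on the
left; these positions have opposite parities. -/
theorem altProd_append_comp_rev {m : ℕ} (s r : Fin m → M) :
    altProd (Fin.append s (r ∘ Fin.rev)) = altProd s * (altProd r)⁻¹ := by
  rw [altProd, List.ofFn_add, List.prod_append, altProd, altProd, List.prod_inv_reverse,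
    List.map_ofFn, List.reverse_ofFn]
  congr 3
  · funext i
    simp only [show Fin.castLE _ i = Fin.castAdd m i from rfl, Fin.append_left, Fin.val_castAdd]
  · funext j
    simp only [Fin.append_right, comp_apply, Fin.val_natAdd, Fin.val_rev]
    have := j.isLt
    rcases Nat.mod_two_eq_zero_or_one (m + j) with h | h
    · rw [if_pos h, if_neg (by omega), inv_inv]
    · rw [if_neg (by omega), if_pos (by omega)]

variable {ι R : Type*} [Fintype ι] [AddCommMonoid R]

theorem sum_altProd_two_mul (γ : ι → M) (F : M → R) (m : ℕ) :
    ∑ u : Fin (2 * m) → ι, F (altProd (γ ∘ u)) =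
      ∑ s : Fin m → ι, ∑ r : Fin m → ι, F (altProd (γ ∘ s) * (altProd (γ ∘ r))⁻¹) := by
  rw [two_mul, ← Fintype.sum_prod_type']
  let e : (Fin m → ι) × (Fin m → ι) ≃ (Fin (m + m) → ι) :=
    (Equiv.prodCongr (Equiv.refl _) (Equiv.arrowCongr Fin.revPerm (Equiv.refl ι))).trans
      (Fin.appendEquiv m m)
  refine (Fintype.sum_equiv e _ _ fun p => ?_).symm
  have he : γ ∘ e p = Fin.append (γ ∘ p.1) ((γ ∘ p.2) ∘ Fin.rev) := by
    funext i
    refine Fin.addCases (fun i => ?_) (fun i => ?_) i <;>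
      simp only [e, Equiv.trans_apply, Equiv.prodCongr_apply, Fin.appendEquiv_apply, Prod.map,
        Fin.append_left, Fin.append_right, comp_apply, Equiv.arrowCongr_apply, Fin.revPerm_symm,
        Equiv.coe_refl, id, Fin.revPerm_apply]
  rw [he, altProd_append_comp_rev]

theorem finsum_rAlt_smul {Gs : Set M} (hG : Gs.Finite) (m : ℕ) (T : M → R) :
    ∑ᶠ g, rAlt Gs m g • T g = ∑ u : Fin (2 * m) → hG.toFinset, T (altProd (Subtype.val ∘ u)) := by
  classical
  set Γ := hG.toFinset
  have hcard (g : M) : rAlt Gs m g = #{u : Fin (2 * m) → Γ | altProd (Subtype.val ∘ u) = g} := by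
    let e : {t : Fin (2 * m) → M // (∀ i, t i ∈ Gs) ∧ altProd t = g} ≃
        {u : Fin (2 * m) → Γ // altProd (Subtype.val ∘ u) = g} :=
      { toFun t := ⟨fun i => ⟨t.1 i, hG.mem_toFinset.2 (t.2.1 i)⟩, t.2.2⟩
        invFun u := ⟨Subtype.val ∘ u.1, fun i => hG.mem_toFinset.1 (u.1 i).2, u.2⟩
        left_inv _ := rfl
        right_inv _ := rfl }
    rw [rAlt, Nat.card_congr e, Nat.card_eq_fintype_card, Fintype.card_subtype]
  rw [Finset.sum_comp T, finsum_eq_sum_of_support_subset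
    (s := univ.image fun u : Fin (2 * m) → Γ => altProd (Subtype.val ∘ u))]
  · simp_rw [hcard]
  · intro g hg
    obtain ⟨u, hu⟩ := card_pos.1 (hcard g ▸ Nat.pos_of_ne_zero (left_ne_zero_of_smul hg))
    exact mem_image.2 ⟨u, mem_univ _, (mem_filter.1 hu).2⟩

end AltProd

theorem norm_finsum_mul_le {X R : Type*} [NormedRing R] {a b : X → R}
    (ha : HasFiniteSupport a) (hb : HasFiniteSupport b) :
    ‖∑ᶠ x, a x * b x‖ ≤ √(∑ᶠ x, ‖a x‖ ^ 2) * √(∑ᶠ x, ‖b x‖ ^ 2) := by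
  set s := (ha.union hb).toFinset
  have ha' : support a ⊆ s := by simp [s]
  have hb' : support b ⊆ s := by simp [s]
  rw [finsum_eq_sum_of_support_subset _ ((support_mul_subset_left _ _).trans ha'),
    finsum_eq_sum_of_support_subset _ (by simpa using ha'),
    finsum_eq_sum_of_support_subset _ (by simpa using hb')]
  calc ‖∑ x ∈ s, a x * b x‖ ≤ ∑ x ∈ s, ‖a x‖ * ‖b x‖ :=
        (norm_sum_le _ _).trans (sum_le_sum fun x _ => norm_mul_le _ _)
    _ ≤ _ := Real.sum_mul_le_sqrt_mul_sqrt s _ _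

theorem pow_two_pow_le_of_sq_le {q : ℕ → ℝ} {N : ℝ} (hq : 0 ≤ q 1)
    (h : ∀ m, q m ^ 2 ≤ N * q (2 * m)) (j : ℕ) :
    q 1 ^ 2 ^ j ≤ N ^ (2 ^ j - 1) * q (2 ^ j) := by
  induction j with
  | zero => simp
  | succ j ih =>
    have hj : 2 ^ (j + 1) - 1 = 2 * (2 ^ j - 1) + 1 := by
      have := Nat.one_le_two_pow (n := j)
      rw [pow_succ]
      omega
    calc q 1 ^ 2 ^ (j + 1) = (q 1 ^ 2 ^ j) ^ 2 := by rw [pow_succ, pow_mul]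
      _ ≤ (N ^ (2 ^ j - 1) * q (2 ^ j)) ^ 2 := pow_le_pow_left₀ (by positivity) ih 2
      _ = (N ^ (2 ^ j - 1)) ^ 2 * q (2 ^ j) ^ 2 := mul_pow _ _ _
      _ ≤ (N ^ (2 ^ j - 1)) ^ 2 * (N * q (2 * 2 ^ j)) := by gcongr; exact h _
      _ = N ^ (2 ^ (j + 1) - 1) * q (2 ^ (j + 1)) := by
        rw [hj, pow_succ' 2 j]
        ring

section AltSum

variable {G X ι : Type*} [Group G] [MulAction G X] [Fintype ι]

theorem hasFiniteSupport_comp_smul {R : Type*} [Zero R] {f : X → R} (hf : HasFiniteSupport f)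
    (g : G) : HasFiniteSupport fun x => f (g • x) :=
  hf.fun_comp_of_injective (MulAction.injective g)

noncomputable def altSum (γ : ι → G) (f : X → ℂ) (n : ℕ) (x : X) : ℂ :=
  ∑ u : Fin n → ι, f (altProd (γ ∘ u) • x)

variable {γ : ι → G} {f : X → ℂ}

theorem hasFiniteSupport_altSum (hf : HasFiniteSupport f) (n : ℕ) :
    HasFiniteSupport (altSum γ f n) :=
  HasFiniteSupport.sum (fun _ => hasFiniteSupport_comp_smul hf _) univ

theorem altSum_one (f : X → ℂ) (x : X) : altSum γ f 1 x = ∑ i, f (γ i • x) :=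
  Fintype.sum_equiv (Equiv.funUnique (Fin 1) ι) _ _ fun u => by simp [altProd_one]

theorem finsum_mul_conj_altSum (hf : HasFiniteSupport f) (n : ℕ) :
    ∑ᶠ x, f x * conj (altSum γ f n x) =
      ∑ u : Fin n → ι, ∑ᶠ x, f x * conj (f (altProd (γ ∘ u) • x)) := by
  simp only [altSum, map_sum, mul_sum]
  exact finsum_sum_comm _ _ fun u _ => hf.fun_mul_left _

theorem finsum_mul_conj_smul_mul_inv (f : X → ℂ) (a b : G) :
    ∑ᶠ x, f x * conj (f ((a * b⁻¹) • x)) = ∑ᶠ x, f (b • x) * conj (f (a • x)) := by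
  rw [← finsum_comp_equiv (MulAction.toPerm b)]
  simp [smul_smul]

theorem sum_finsum_mul_conj_eq_finsum_norm_sq (hf : HasFiniteSupport f) (m : ℕ) :
    ∑ u : Fin (2 * m) → ι, ∑ᶠ x, f x * conj (f (altProd (γ ∘ u) • x)) =
      ((∑ᶠ x, ‖altSum γ f m x‖ ^ 2 : ℝ) : ℂ) := by
  have hF := hasFiniteSupport_altSum (γ := γ) hf m
  calc ∑ u : Fin (2 * m) → ι, ∑ᶠ x, f x * conj (f (altProd (γ ∘ u) • x))
      = ∑ r : Fin m → ι, ∑ s : Fin m → ι,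
          ∑ᶠ x, f (altProd (γ ∘ r) • x) * conj (f (altProd (γ ∘ s) • x)) := by
        rw [sum_altProd_two_mul γ (fun g => ∑ᶠ x, f x * conj (f (g • x))), sum_comm]
        simp only [finsum_mul_conj_smul_mul_inv]
    _ = ∑ᶠ x, altSum γ f m x * conj (altSum γ f m x) := by
        simp only [altSum, map_sum, sum_mul_sum]
        rw [finsum_sum_comm _ _ fun r _ =>
          HasFiniteSupport.sum (fun s => (hasFiniteSupport_comp_smul hf _).fun_mul_left _) _]
        refine sum_congr rfl fun r _ => ?_
        rw [finsum_sum_comm _ _ fun s _ => (hasFiniteSupport_comp_smul hf _).fun_mul_left _]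
    _ = ((∑ᶠ x, ‖altSum γ f m x‖ ^ 2 : ℝ) : ℂ) := by
        simp only [Complex.mul_conj', ← Complex.ofReal_pow]
        exact (Complex.ofRealHom.toAddMonoidHom.map_finsum (by fun_prop (disch := simp))).symm

theorem sq_finsum_norm_sq_altSum_le (hf : HasFiniteSupport f) (m : ℕ) :
    (∑ᶠ x, ‖altSum γ f m x‖ ^ 2) ^ 2 ≤
      (∑ᶠ x, ‖f x‖ ^ 2) * ∑ᶠ x, ‖altSum γ f (2 * m) x‖ ^ 2 := by
  have hF := hasFiniteSupport_altSum (γ := γ) hf (2 * m)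
  rw [← Real.le_sqrt (finsum_nonneg fun _ => by positivity)
      (mul_nonneg (finsum_nonneg fun _ => by positivity) (finsum_nonneg fun _ => by positivity)),
    Real.sqrt_mul (finsum_nonneg fun _ => by positivity)]
  calc ∑ᶠ x, ‖altSum γ f m x‖ ^ 2 = ‖∑ᶠ x, f x * conj (altSum γ f (2 * m) x)‖ := by
        rw [finsum_mul_conj_altSum hf, sum_finsum_mul_conj_eq_finsum_norm_sq hf,
          Complex.norm_real, Real.norm_of_nonneg (finsum_nonneg fun _ => by positivity)]
    _ ≤ √(∑ᶠ x, ‖f x‖ ^ 2) * √(∑ᶠ x, ‖conj (altSum γ f (2 * m) x)‖ ^ 2) :=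
        norm_finsum_mul_le hf (by fun_prop (disch := simp))
    _ = _ := by simp only [Complex.norm_conj]

theorem norm_sum_finsum_mul_smul_le {f₁ : X → ℂ} (h₁ : HasFiniteSupport f₁)
    (hf : HasFiniteSupport f) :
    ‖∑ i, ∑ᶠ x, f₁ x * f (γ i • x)‖ ≤
      √(∑ᶠ x, ‖f₁ x‖ ^ 2) * √(∑ᶠ x, ‖altSum γ f 1 x‖ ^ 2) := by
  rw [sum_finsum_comm _ _ fun i _ => h₁.fun_mul_left _]
  simp only [← mul_sum, ← altSum_one]
  exact norm_finsum_mul_le h₁ (hasFiniteSupport_altSum hf 1)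

end AltSum

theorem stmt10 {G X : Type*} [Group G] [MulAction G X]
    (Gs : Set G) (hG : Gs.Finite) (f₁ f₂ : X → ℂ)
    (h₁ : (Function.support f₁).Finite) (h₂ : (Function.support f₂).Finite)
    (k : ℕ) (hk : 1 ≤ k) :
    ∃ t : ℝ, 0 ≤ t ∧
      (∑ᶠ g : G, (rAlt Gs (2 ^ (k - 1)) g : ℂ) *
          ∑ᶠ x : X, f₂ x * (starRingEnd ℂ) (f₂ (g • x))) = (t : ℂ) ∧
      ‖∑ g ∈ hG.toFinset, ∑ᶠ x : X, f₁ x * f₂ (g • x)‖ ^ (2 ^ k) ≤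
        Real.sqrt (∑ᶠ x : X, ‖f₁ x‖ ^ 2) ^ (2 ^ k) *
          Real.sqrt (∑ᶠ x : X, ‖f₂ x‖ ^ 2) ^ (2 ^ k - 2) * t := by
  obtain ⟨j, rfl⟩ := Nat.exists_eq_add_of_le' hk
  set q : ℕ → ℝ := fun n => ∑ᶠ x, ‖altSum (Subtype.val : hG.toFinset → G) f₂ n x‖ ^ 2
  set N₁ := ∑ᶠ x, ‖f₁ x‖ ^ 2
  set N₂ := ∑ᶠ x, ‖f₂ x‖ ^ 2
  have hq : ∀ n, 0 ≤ q n := fun n => finsum_nonneg fun _ => by positivity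
  refine ⟨q (2 ^ j), hq _, ?_, ?_⟩
  · simp only [Nat.add_sub_cancel, ← nsmul_eq_mul]
    rw [finsum_rAlt_smul hG, sum_finsum_mul_conj_eq_finsum_norm_sq h₂]
  have hbase := norm_sum_finsum_mul_smul_le (γ := (Subtype.val : hG.toFinset → G)) h₁ h₂
  rw [sum_coe_sort hG.toFinset fun g => ∑ᶠ x, f₁ x * f₂ (g • x)] at hbase
  have hexp : 2 ^ (j + 1) - 2 = 2 * (2 ^ j - 1) := by
    have := Nat.one_le_two_pow (n := j)
    rw [pow_succ]
    omega
  calc _ ≤ (√N₁ * √(q 1)) ^ 2 ^ (j + 1) := pow_le_pow_left₀ (norm_nonneg _) hbase _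
    _ = √N₁ ^ 2 ^ (j + 1) * q 1 ^ 2 ^ j := by
        rw [mul_pow, pow_succ, pow_mul' (√(q 1)), Real.sq_sqrt (hq 1)]
    _ ≤ √N₁ ^ 2 ^ (j + 1) * (N₂ ^ (2 ^ j - 1) * q (2 ^ j)) := by
        gcongr
        exact pow_two_pow_le_of_sq_le (hq 1) (sq_finsum_norm_sq_altSum_le h₂) j
    _ = √N₁ ^ 2 ^ (j + 1) * √N₂ ^ (2 ^ (j + 1) - 2) * q (2 ^ j) := by
        rw [hexp, pow_mul, Real.sq_sqrt (finsum_nonneg fun _ => by positivity), mul_assoc]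
end

section
/- Let F be a field, λ ∈ F with λ ≠ 0, and A, B ⊆ F finite sets. Then T₃(G_λ(A,B)) ≤ |A||B| · Σ_{x ∈ F} r_{(A−A)(B−B)}(x)² + |A|⁴|B|⁴, where r_{(A−A)(B−B)}(x) = #{(a₁,a₂,b₁,b₂) ∈ A×A×B×B : (a₁−a₂)(b₁−b₂) = x}. -/
/-!
Write a solution of `M(a₁,b₁) M(a₂,b₂)⁻¹ M(a₃,b₃) = M(a₄,b₄) M(a₅,b₅)⁻¹ M(a₆,b₆)` in the
differences `u = a₁ - a₄`, `v = b₆ - b₃`, `x = a₃ - a₂`, `y = b₁ - b₂`, `x' = a₆ - a₅`,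
`y' = b₄ - b₅`. Multiplying by `λ` replaces the inverses by adjugates, and comparing entries gives
`xy = x'y'`, `(λ + xy) v = λ (y - y')`, `(λ + xy) u = λ (x' - x)` and `uy = x'v`. The last one
says that `((a₁,a₄),(b₁,b₂))` and `((a₆,a₅),(b₆,b₃))` have the same product
`(a - a')(b - b')`. If `λ + uy ≠ 0`, the third and second relations recover `a₂` and `b₅` from
these two quadruples together with `a₃` and `b₄`, which gives the energy term. If `λ + uy = 0`,
then `y` is fixed by `u`, and `x' = u`, `v = y`, `xy = uy'`, so the solution is fixed by
`a₁, a₂, a₄, a₅, b₁, b₃, b₄, b₅`, which gives the term `|A|⁴|B|⁴`.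
-/

open Finset

/-- `T_k(G)`: the number of `2k`-tuples from `G` whose two alternating `k`-fold products
coincide. -/
noncomputable def setT {M : Type*} [Monoid M] [Inv M] (k : ℕ) (G : Set M) : ℕ :=
  Nat.card {t : (Fin k → M) × (Fin k → M) //
    (∀ i, t.1 i ∈ G) ∧ (∀ i, t.2 i ∈ G) ∧ altProd t.1 = altProd t.2}

/-- The matrix with rows `(−a, ab+λ)` and `(−1, b)`; it has determinant `λ`. -/
def hypMat {F : Type*} [CommRing F] (lam a b : F) : Matrix (Fin 2) (Fin 2) F :=
  !![-a, a * b + lam; -1, b]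

/-- `G_λ(A,B)`, the set of matrices `hypMat lam a b` with `a ∈ A`, `b ∈ B`. -/
def hypSet {F : Type*} [CommRing F] (lam : F) (A B : Set F) :
    Set (Matrix (Fin 2) (Fin 2) F) :=
  {M | ∃ a ∈ A, ∃ b ∈ B, M = hypMat lam a b}

/-- `r_{(A−A)(B−B)}(x) = #{(a₁,a₂,b₁,b₂) ∈ A×A×B×B : (a₁−a₂)(b₁−b₂) = x}`. -/
def rProd {F : Type*} [CommRing F] [DecidableEq F] (A B : Finset F) (x : F) : ℕ :=
  (((A ×ˢ A) ×ˢ (B ×ˢ B)).filter fun t => (t.1.1 - t.1.2) * (t.2.1 - t.2.2) = x).card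

lemma finsum_card_filter_eq_sq {ι β : Type*} [DecidableEq β] (s : Finset ι) (f : ι → β) :
    ∑ᶠ x, #{i ∈ s | f i = x} ^ 2 = #{p ∈ s ×ˢ s | f p.1 = f p.2} := by
  have hsupp : (Function.support fun x => #{i ∈ s | f i = x} ^ 2) ⊆ ↑(s.image f) := by
    intro x hx
    obtain ⟨i, hi⟩ : {i ∈ s | f i = x}.Nonempty := by
      rw [← card_pos]; exact pos_of_ne_zero (pow_ne_zero_iff two_ne_zero |>.mp hx)
    rw [mem_filter] at hi
    exact mem_coe.2 (hi.2 ▸ mem_image_of_mem f hi.1)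
  rw [finsum_eq_sum_of_support_subset _ hsupp,
    card_eq_sum_card_fiberwise (f := fun p => f p.1) (t := s.image f)]
  · refine sum_congr rfl fun x _ => ?_
    rw [sq, ← card_product]
    congr 1
    ext ⟨i, j⟩
    simp only [mem_filter, mem_product]
    grind
  · intro p hp
    exact mem_coe.2 (mem_image_of_mem f (mem_product.1 (mem_filter.1 hp).1).1)

lemma altProd_three {M : Type*} [Monoid M] [Inv M] (g : Fin 3 → M) :
    altProd g = g 0 * (g 1)⁻¹ * g 2 := by
  simp [altProd, List.ofFn_succ, mul_assoc]

section TupleSolutions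

variable {α M : Type*} [Monoid M] [Inv M] [DecidableEq M]

def tupleSolutions (k : ℕ) (φ : α → M) (S : Finset α) : Finset ((Fin k → α) × (Fin k → α)) :=
  {w ∈ Fintype.piFinset (fun _ => S) ×ˢ Fintype.piFinset (fun _ => S) |
    altProd (φ ∘ w.1) = altProd (φ ∘ w.2)}

lemma mem_tupleSolutions {k : ℕ} {φ : α → M} {S : Finset α} {w : (Fin k → α) × (Fin k → α)} :
    w ∈ tupleSolutions k φ S ↔
      (∀ i, w.1 i ∈ S) ∧ (∀ i, w.2 i ∈ S) ∧ altProd (φ ∘ w.1) = altProd (φ ∘ w.2) := by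
  simp [tupleSolutions, and_assoc]

lemma setT_image_le (k : ℕ) (φ : α → M) (S : Finset α) :
    setT k (φ '' S) ≤ #(tupleSolutions k φ S) := by
  rw [← Nat.card_eq_finsetCard]
  refine Nat.card_le_card_of_surjective (fun w => ⟨(φ ∘ w.1.1, φ ∘ w.1.2), ?_⟩) ?_
  · obtain ⟨h₁, h₂, h⟩ := mem_tupleSolutions.1 w.2
    exact ⟨fun i => ⟨_, h₁ i, rfl⟩, fun i => ⟨_, h₂ i, rfl⟩, h⟩
  · rintro ⟨⟨g₁, g₂⟩, hg⟩
    obtain ⟨h₁, h₂, h⟩ := id hg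
    choose x₁ hx₁S hx₁ using h₁
    choose x₂ hx₂S hx₂ using h₂
    have e₁ : φ ∘ x₁ = g₁ := funext hx₁
    have e₂ : φ ∘ x₂ = g₂ := funext hx₂
    refine ⟨⟨(x₁, x₂), mem_tupleSolutions.2 ⟨hx₁S, hx₂S, ?_⟩⟩, ?_⟩
    · rwa [e₁, e₂]
    · simp only [e₁, e₂]

end TupleSolutions

lemma fin_three_ext {α : Type*} {s t : Fin 3 → α} (h₀ : s 0 = t 0) (h₁ : s 1 = t 1)
    (h₂ : s 2 = t 2) : s = t := by
  ext i; fin_cases i <;> assumption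

structure DiffRelations {F : Type*} [CommRing F] (lam u v x y x' y' : F) : Prop where
  mul_eq : x * y = x' * y'
  v_eq : (lam + x * y) * v = lam * (y - y')
  u_eq : (lam + x * y) * u = lam * (x' - x)
  uy_eq : u * y = x' * v

namespace DiffRelations

variable {F : Type*} [CommRing F] [IsDomain F] {lam u v x y x' y' : F}

lemma eq_of_ne_zero (hlam : lam ≠ 0) {x₁ x₂ y₁' y₂' : F}
    (h₁ : DiffRelations lam u v x₁ y x' y₁') (h₂ : DiffRelations lam u v x₂ y x' y₂')
    (hc : lam + u * y ≠ 0) : x₁ = x₂ ∧ y₁' = y₂' := by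
  have hx : (x₁ - x₂) * (lam + u * y) = 0 := by linear_combination h₁.u_eq - h₂.u_eq
  obtain rfl : x₁ = x₂ := sub_eq_zero.1 ((mul_eq_zero.1 hx).resolve_right hc)
  have hy : lam * (y₁' - y₂') = 0 := by linear_combination h₁.v_eq - h₂.v_eq
  exact ⟨rfl, sub_eq_zero.1 ((mul_eq_zero.1 hy).resolve_left hlam)⟩

lemma of_eq_zero (hlam : lam ≠ 0) (h : DiffRelations lam u v x y x' y')
    (hc : lam + u * y = 0) : u ≠ 0 ∧ y ≠ 0 ∧ x' = u ∧ v = y ∧ x * y = u * y' := by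
  have hu : u ≠ 0 := by rintro rfl; exact hlam (by simpa using hc)
  have hy : y ≠ 0 := by rintro rfl; exact hlam (by simpa using hc)
  have hx' : x' = u := by
    refine sub_eq_zero.1 ((mul_eq_zero.1 (?_ : lam * (x' - u) = 0)).resolve_left hlam)
    linear_combination -h.u_eq + x * hc
  subst hx'
  exact ⟨hu, hy, rfl, (mul_left_cancel₀ hu h.uy_eq).symm, h.mul_eq⟩

lemma eq_of_eq_zero (hlam : lam ≠ 0) {v₁ v₂ x₁ x₂ y₁ y₂ x₁' x₂' : F}
    (h₁ : DiffRelations lam u v₁ x₁ y₁ x₁' y') (h₂ : DiffRelations lam u v₂ x₂ y₂ x₂' y')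
    (hc₁ : lam + u * y₁ = 0) (hc₂ : lam + u * y₂ = 0) :
    y₁ = y₂ ∧ x₁' = x₂' ∧ v₁ = v₂ ∧ x₁ = x₂ := by
  obtain ⟨hu, hy, hx₁', hv₁, hxy₁⟩ := h₁.of_eq_zero hlam hc₁
  obtain ⟨-, -, hx₂', hv₂, hxy₂⟩ := h₂.of_eq_zero hlam hc₂
  obtain rfl : y₁ = y₂ := mul_left_cancel₀ hu (by linear_combination hc₁ - hc₂)
  exact ⟨rfl, hx₁'.trans hx₂'.symm, hv₁.trans hv₂.symm,
    mul_right_cancel₀ hy (hxy₁.trans hxy₂.symm)⟩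

end DiffRelations

section HypMat

lemma hypSet_eq_image {F : Type*} [CommRing F] (lam : F) (A B : Set F) :
    hypSet lam A B = Function.uncurry (hypMat lam) '' (A ×ˢ B) := by
  ext M
  simp [hypSet, eq_comm]

lemma det_hypMat {F : Type*} [CommRing F] (lam a b : F) : (hypMat lam a b).det = lam := by
  simp [hypMat, Matrix.det_fin_two]

variable {F : Type*} [Field F] {lam : F}

lemma smul_hypMat_mul_inv_mul (hlam : lam ≠ 0) (a₁ b₁ a₂ b₂ a₃ b₃ : F) :
    lam • (hypMat lam a₁ b₁ * (hypMat lam a₂ b₂)⁻¹ * hypMat lam a₃ b₃) =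
      hypMat lam a₁ b₁ * (hypMat lam a₂ b₂).adjugate * hypMat lam a₃ b₃ := by
  rw [Matrix.inv_def, det_hypMat, Ring.inverse_eq_inv', Matrix.mul_smul, Matrix.smul_mul,
    smul_smul, mul_inv_cancel₀ hlam, one_smul]

lemma diffRelations_of_eq (hlam : lam ≠ 0) {a₁ b₁ a₂ b₂ a₃ b₃ a₄ b₄ a₅ b₅ a₆ b₆ : F}
    (h : hypMat lam a₁ b₁ * (hypMat lam a₂ b₂)⁻¹ * hypMat lam a₃ b₃ =
      hypMat lam a₄ b₄ * (hypMat lam a₅ b₅)⁻¹ * hypMat lam a₆ b₆) :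
    DiffRelations lam (a₁ - a₄) (b₆ - b₃) (a₃ - a₂) (b₁ - b₂) (a₆ - a₅) (b₄ - b₅) := by
  have h' := congrArg (lam • ·) h
  simp only [smul_hypMat_mul_inv_mul hlam] at h'
  have e₀₀ := congrFun₂ h' 0 0
  have e₀₁ := congrFun₂ h' 0 1
  have e₁₀ := congrFun₂ h' 1 0
  have e₁₁ := congrFun₂ h' 1 1
  simp only [hypMat, Matrix.adjugate_fin_two, Matrix.mul_apply, Fin.sum_univ_two, Matrix.of_apply,
    Matrix.cons_val', Matrix.cons_val_zero, Matrix.cons_val_one, Matrix.cons_val_fin_one]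
    at e₀₀ e₀₁ e₁₀ e₁₁
  refine ⟨by linear_combination -e₁₀, by linear_combination -b₆ * e₁₀ - e₁₁,
    by linear_combination -e₀₀ + a₄ * e₁₀, mul_left_cancel₀ hlam ?_⟩
  linear_combination b₃ * e₀₀ - a₄ * b₃ * e₁₀ + e₀₁ - a₄ * e₁₁

end HypMat

section Counting

variable {F : Type*} [Field F] [DecidableEq F] {lam : F} {A B : Finset F}

def diffProd (t : (F × F) × (F × F)) : F := (t.1.1 - t.1.2) * (t.2.1 - t.2.2)

lemma diffRelations_of_mem_tupleSolutions (hlam : lam ≠ 0) {s t : Fin 3 → F × F}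
    (h : (s, t) ∈ tupleSolutions 3 (Function.uncurry (hypMat lam)) (A ×ˢ B)) :
    DiffRelations lam ((s 0).1 - (t 0).1) ((t 2).2 - (s 2).2) ((s 2).1 - (s 1).1)
      ((s 0).2 - (s 1).2) ((t 2).1 - (t 1).1) ((t 0).2 - (t 1).2) := by
  have h' := (mem_tupleSolutions.1 h).2.2
  rw [altProd_three, altProd_three] at h'
  exact diffRelations_of_eq hlam h'

lemma card_filter_ne_zero_le (hlam : lam ≠ 0) :
    #{w ∈ tupleSolutions 3 (Function.uncurry (hypMat lam)) (A ×ˢ B) |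
        lam + ((w.1 0).1 - (w.2 0).1) * ((w.1 0).2 - (w.1 1).2) ≠ 0} ≤
      #A * #B * #{p ∈ ((A ×ˢ A) ×ˢ (B ×ˢ B)) ×ˢ ((A ×ˢ A) ×ˢ (B ×ˢ B)) |
        diffProd p.1 = diffProd p.2} := by
  rw [← card_product, ← card_product]
  refine card_le_card_of_injOn (fun w => (((w.1 2).1, (w.2 0).2),
    ((((w.1 0).1, (w.2 0).1), ((w.1 0).2, (w.1 1).2)),
      (((w.2 2).1, (w.2 1).1), ((w.2 2).2, (w.1 2).2))))) ?_ ?_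
  · rintro ⟨s, t⟩ hw
    obtain ⟨hw, -⟩ := mem_filter.1 hw
    obtain ⟨hs, ht, -⟩ := mem_tupleSolutions.1 hw
    simp only [mem_product] at hs ht
    refine mem_product.2 ⟨mem_product.2 ⟨(hs 2).1, (ht 0).2⟩,
      mem_filter.2 ⟨?_, (diffRelations_of_mem_tupleSolutions hlam hw).uy_eq⟩⟩
    simp only [mem_product]
    exact ⟨⟨⟨(hs 0).1, (ht 0).1⟩, (hs 0).2, (hs 1).2⟩, ⟨(ht 2).1, (ht 1).1⟩, (ht 2).2, (hs 2).2⟩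
  · rintro ⟨s, t⟩ hw ⟨s', t'⟩ hw' hkey
    simp only [mem_coe, mem_filter] at hw hw'
    simp only [Prod.mk.injEq] at hkey
    obtain ⟨⟨ha₃, hb₄⟩, ⟨⟨ha₁, ha₄⟩, hb₁, hb₂⟩, ⟨ha₆, ha₅⟩, hb₆, hb₃⟩ := hkey
    have R := diffRelations_of_mem_tupleSolutions hlam hw.1
    have R' := diffRelations_of_mem_tupleSolutions hlam hw'.1
    rw [← ha₁, ← ha₃, ← ha₄, ← ha₅, ← ha₆, ← hb₁, ← hb₂, ← hb₃, ← hb₄, ← hb₆] at R'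
    obtain ⟨ha₂, hb₅⟩ := R.eq_of_ne_zero hlam R' hw.2
    exact Prod.ext
      (fin_three_ext (Prod.ext ha₁ hb₁) (Prod.ext (sub_right_inj.1 ha₂) hb₂) (Prod.ext ha₃ hb₃))
      (fin_three_ext (Prod.ext ha₄ hb₄) (Prod.ext ha₅ (sub_right_inj.1 hb₅)) (Prod.ext ha₆ hb₆))

lemma card_filter_eq_zero_le (hlam : lam ≠ 0) :
    #{w ∈ tupleSolutions 3 (Function.uncurry (hypMat lam)) (A ×ˢ B) |
        lam + ((w.1 0).1 - (w.2 0).1) * ((w.1 0).2 - (w.1 1).2) = 0} ≤ #A ^ 4 * #B ^ 4 := by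
  calc _ ≤ #((A ×ˢ A ×ˢ A ×ˢ A) ×ˢ (B ×ˢ B ×ˢ B ×ˢ B)) := ?_
    _ = #A ^ 4 * #B ^ 4 := by simp only [card_product]; ring
  refine card_le_card_of_injOn (fun w => (((w.1 0).1, (w.1 1).1, (w.2 0).1, (w.2 1).1),
    ((w.1 0).2, (w.1 2).2, (w.2 0).2, (w.2 1).2))) ?_ ?_
  · rintro ⟨s, t⟩ hw
    obtain ⟨hs, ht, -⟩ := mem_tupleSolutions.1 (mem_filter.1 hw).1
    simp only [mem_product] at hs ht
    simp only [mem_coe, mem_product]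
    exact ⟨⟨(hs 0).1, (hs 1).1, (ht 0).1, (ht 1).1⟩, (hs 0).2, (hs 2).2, (ht 0).2, (ht 1).2⟩
  · rintro ⟨s, t⟩ hw ⟨s', t'⟩ hw' hkey
    simp only [mem_coe, mem_filter] at hw hw'
    simp only [Prod.mk.injEq] at hkey
    obtain ⟨⟨ha₁, ha₂, ha₄, ha₅⟩, hb₁, hb₃, hb₄, hb₅⟩ := hkey
    have R := diffRelations_of_mem_tupleSolutions hlam hw.1
    have R' := diffRelations_of_mem_tupleSolutions hlam hw'.1
    rw [← ha₁, ← ha₂, ← ha₄, ← ha₅, ← hb₁, ← hb₃, ← hb₄, ← hb₅] at R'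
    rw [← ha₁, ← ha₄, ← hb₁] at hw'
    obtain ⟨hb₂, ha₆, hb₆, ha₃⟩ := R.eq_of_eq_zero hlam R' hw.2 hw'.2
    exact Prod.ext
      (fin_three_ext (Prod.ext ha₁ hb₁) (Prod.ext ha₂ (sub_right_inj.1 hb₂))
        (Prod.ext (sub_left_inj.1 ha₃) hb₃))
      (fin_three_ext (Prod.ext ha₄ hb₄) (Prod.ext ha₅ hb₅)
        (Prod.ext (sub_left_inj.1 ha₆) (sub_left_inj.1 hb₆)))

end Counting

theorem stmt11 {F : Type*} [Field F] [DecidableEq F] (lam : F) (hlam : lam ≠ 0)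
    (A B : Finset F) :
    setT 3 (hypSet lam ↑A ↑B) ≤
      A.card * B.card * (∑ᶠ x : F, rProd A B x ^ 2) + A.card ^ 4 * B.card ^ 4 := by
  set S := tupleSolutions 3 (Function.uncurry (hypMat lam)) (A ×ˢ B)
  have henergy : ∑ᶠ x, rProd A B x ^ 2 = #{p ∈ ((A ×ˢ A) ×ˢ (B ×ˢ B)) ×ˢ ((A ×ˢ A) ×ˢ (B ×ˢ B)) |
      diffProd p.1 = diffProd p.2} :=
    finsum_card_filter_eq_sq _ diffProd
  calc setT 3 (hypSet lam ↑A ↑B) ≤ #S := by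
        rw [hypSet_eq_image, ← coe_product]; exact setT_image_le _ _ _
    _ = #{w ∈ S | lam + ((w.1 0).1 - (w.2 0).1) * ((w.1 0).2 - (w.1 1).2) ≠ 0} +
        #{w ∈ S | lam + ((w.1 0).1 - (w.2 0).1) * ((w.1 0).2 - (w.1 1).2) = 0} := by
        rw [add_comm, card_filter_add_card_filter_not]
    _ ≤ _ := by
        rw [henergy]
        exact add_le_add (card_filter_ne_zero_le hlam) (card_filter_eq_zero_le hlam)
end

section
/- Let F be a field, λ ∈ F with λ ≠ 0, and A, B ⊆ F finite sets. Then T₂(G_λ(A,B)) = |A|² (E⁺(B) − |B|²) + |B|² E⁺(A); in particular T₂(G_λ(A,B)) ≤ |A|² E⁺(B) + |B|² E⁺(A). -/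
open Finset

/-- Additive energy `E⁺(X) = #{(x₁,x₂,x₃,x₄) ∈ X⁴ : x₁+x₂ = x₃+x₄}`. -/
def addE {R : Type*} [AddCommMonoid R] [DecidableEq R] (X : Finset R) : ℕ :=
  (((X ×ˢ X) ×ˢ (X ×ˢ X)).filter fun t => t.1.1 + t.1.2 = t.2.1 + t.2.2).card

/- ### Auxiliary lemmas -/

lemma altProd_two {M : Type*} [Monoid M] [Inv M] (g : Fin 2 → M) :
    altProd g = g 0 * (g 1)⁻¹ := by
  simp [altProd, List.ofFn_succ]

section Aux

variable {F : Type*} [Field F]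

lemma detHyp (lam a b : F) : (hypMat lam a b).det = lam := by
  simp [hypMat, Matrix.det_fin_two_of]

lemma hypMat_inj {lam a b a' b' : F} (h : hypMat lam a b = hypMat lam a' b') :
    a = a' ∧ b = b' := by
  have h0 := congrFun (congrFun h 0) 0
  have h1 := congrFun (congrFun h 1) 1
  simp [hypMat] at h0 h1
  exact ⟨h0, h1⟩

lemma invAux {n : Type*} [Fintype n] [DecidableEq n] {lam : F} (hlam : lam ≠ 0)
    (X Y Z W : Matrix n n F) (hY : Y.det = lam) (hW : W.det = lam) :
    X * Y⁻¹ = Z * W⁻¹ ↔ X * Y.adjugate = Z * W.adjugate := by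
  rw [Matrix.inv_def, Matrix.inv_def, hY, hW, Matrix.mul_smul, Matrix.mul_smul,
    Ring.inverse_eq_inv']
  constructor
  · intro h; exact smul_right_injective (Matrix n n F) (inv_ne_zero hlam) h
  · intro h; rw [h]

lemma entryAux {lam a₁ b₁ a₂ b₂ a₃ b₃ a₄ b₄ : F} :
    hypMat lam a₁ b₁ * (hypMat lam a₂ b₂).adjugate
      = hypMat lam a₃ b₃ * (hypMat lam a₄ b₄).adjugate ↔
    (b₁ - b₂ = b₃ - b₄ ∧ a₁ * (b₁ - b₂) = a₃ * (b₃ - b₄) ∧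
      a₂ * (b₁ - b₂) = a₄ * (b₃ - b₄) ∧
      -(a₁ * a₂ * (b₁ - b₂)) + lam * (a₁ - a₂) = -(a₃ * a₄ * (b₃ - b₄)) + lam * (a₃ - a₄)) := by
  simp only [hypMat, Matrix.adjugate_fin_two_of, Matrix.mul_fin_two, ← Matrix.ext_iff,
    Fin.forall_fin_two, Matrix.of_apply, Matrix.cons_val', Matrix.cons_val_zero,
    Matrix.cons_val_one, Matrix.head_cons, Matrix.empty_val', Matrix.cons_val_fin_one,
    Matrix.head_fin_const]
  constructor
  · rintro ⟨⟨h00, h01⟩, h10, h11⟩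
    exact ⟨by linear_combination h10, by linear_combination h00, by linear_combination -h11,
      by linear_combination h01⟩
  · rintro ⟨h1, h2, h3, h4⟩
    exact ⟨⟨by linear_combination h2, by linear_combination h4⟩, by linear_combination h1,
      by linear_combination -h3⟩

lemma keyIff {lam : F} (hlam : lam ≠ 0) (a₁ b₁ a₂ b₂ a₃ b₃ a₄ b₄ : F) :
    hypMat lam a₁ b₁ * (hypMat lam a₂ b₂)⁻¹ = hypMat lam a₃ b₃ * (hypMat lam a₄ b₄)⁻¹ ↔
    (b₁ - b₂ = b₃ - b₄ ∧
      ((b₁ ≠ b₂ ∧ a₁ = a₃ ∧ a₂ = a₄) ∨ (b₁ = b₂ ∧ a₁ - a₂ = a₃ - a₄))) := by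
  rw [invAux hlam _ _ _ _ (detHyp _ _ _) (detHyp _ _ _), entryAux]
  constructor
  · rintro ⟨h1, h2, h3, h4⟩
    refine ⟨h1, ?_⟩
    by_cases hb : b₁ = b₂
    · right
      refine ⟨hb, ?_⟩
      have hd : b₃ - b₄ = 0 := by rw [← h1, hb, sub_self]
      have : lam * (a₁ - a₂) = lam * (a₃ - a₄) := by
        linear_combination h4 + a₁*a₂*hb - a₃*a₄*hd
      exact mul_left_cancel₀ hlam this
    · left
      have hd : b₁ - b₂ ≠ 0 := sub_ne_zero.mpr hb
      rw [← h1] at h2 h3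
      exact ⟨hb, mul_right_cancel₀ hd h2, mul_right_cancel₀ hd h3⟩
  · rintro ⟨h1, (⟨hb, ha1, ha2⟩ | ⟨hb, ha⟩)⟩
    · subst ha1; subst ha2; rw [h1]; exact ⟨rfl, rfl, rfl, rfl⟩
    · have hd : b₁ - b₂ = 0 := by rw [hb, sub_self]
      have hd' : b₃ - b₄ = 0 := by rw [← h1, hd]
      exact ⟨h1, by rw [hd, hd']; ring, by rw [hd, hd']; ring,
        by rw [hd, hd']; linear_combination lam * ha⟩

variable [DecidableEq F]

lemma diff_energy (X : Finset F) :
    ((((X ×ˢ X) ×ˢ (X ×ˢ X)).filter fun t => t.1.1 - t.1.2 = t.2.1 - t.2.2).card) = addE X := by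
  rw [addE]
  refine Finset.card_bij' (fun t _ => ((t.1.1, t.2.2), (t.2.1, t.1.2)))
    (fun t _ => ((t.1.1, t.2.2), (t.2.1, t.1.2))) ?_ ?_ ?_ ?_
  · intro t ht
    simp only [mem_filter, mem_product] at ht ⊢
    obtain ⟨⟨⟨h1, h2⟩, h3, h4⟩, h5⟩ := ht
    exact ⟨⟨⟨h1, h4⟩, h3, h2⟩, by linear_combination h5⟩
  · intro t ht
    simp only [mem_filter, mem_product] at ht ⊢
    obtain ⟨⟨⟨h1, h2⟩, h3, h4⟩, h5⟩ := ht
    exact ⟨⟨⟨h1, h4⟩, h3, h2⟩, by linear_combination h5⟩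
  · intro t _; rfl
  · intro t _; rfl

lemma deq_card (X : Finset F) :
    ((((X ×ˢ X) ×ˢ (X ×ˢ X)).filter fun t =>
        (t.1.1 - t.1.2 = t.2.1 - t.2.2) ∧ t.1.1 = t.1.2).card) = X.card ^ 2 := by
  rw [sq, ← Finset.card_product]
  refine Finset.card_bij' (fun t _ => (t.1.1, t.2.1)) (fun u _ => ((u.1, u.1), (u.2, u.2)))
    ?_ ?_ ?_ ?_
  · intro t ht
    simp only [mem_filter, mem_product] at ht ⊢
    exact ⟨ht.1.1.1, ht.1.2.1⟩
  · intro u hu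
    simp only [mem_filter, mem_product, mem_coe] at hu ⊢
    exact ⟨⟨⟨hu.1, hu.1⟩, hu.2, hu.2⟩, by ring, by trivial⟩
  · rintro ⟨⟨x1, x2⟩, x3, x4⟩ ht
    simp only [mem_filter, mem_product] at ht
    obtain ⟨-, h5, h6⟩ := ht
    have h7 : x4 = x3 := by linear_combination h5 - h6
    simp [h6, h7]
  · intro u _; rfl

end Aux

theorem stmt12 {F : Type*} [Field F] [DecidableEq F] (lam : F) (hlam : lam ≠ 0)
    (A B : Finset F) :
    (setT 2 (hypSet lam ↑A ↑B) : ℤ) =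
        (A.card : ℤ) ^ 2 * ((addE B : ℤ) - (B.card : ℤ) ^ 2) +
          (B.card : ℤ) ^ 2 * (addE A : ℤ) ∧
      setT 2 (hypSet lam ↑A ↑B) ≤
        A.card ^ 2 * addE B + B.card ^ 2 * addE A := by
  -- the parametrizing finsets
  set base : Finset (((F × F) × (F × F)) × ((F × F) × (F × F))) :=
    ((A ×ˢ B) ×ˢ (A ×ˢ B)) ×ˢ ((A ×ˢ B) ×ˢ (A ×ˢ B)) with hbase
  set S : Finset (((F × F) × (F × F)) × ((F × F) × (F × F))) :=
    base.filter (fun q =>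
      q.1.1.2 - q.1.2.2 = q.2.1.2 - q.2.2.2 ∧
        ((q.1.1.2 ≠ q.1.2.2 ∧ q.1.1.1 = q.2.1.1 ∧ q.1.2.1 = q.2.2.1) ∨
          (q.1.1.2 = q.1.2.2 ∧ q.1.1.1 - q.1.2.1 = q.2.1.1 - q.2.2.1))) with hS
  -- Step 1 : setT равно card S
  have hmem : ∀ q ∈ S,
      (∀ i : Fin 2, (![hypMat lam q.1.1.1 q.1.1.2, hypMat lam q.1.2.1 q.1.2.2]) i
          ∈ hypSet lam (↑A) (↑B)) ∧
      (∀ i : Fin 2, (![hypMat lam q.2.1.1 q.2.1.2, hypMat lam q.2.2.1 q.2.2.2]) i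
          ∈ hypSet lam (↑A) (↑B)) ∧
      altProd ![hypMat lam q.1.1.1 q.1.1.2, hypMat lam q.1.2.1 q.1.2.2]
        = altProd ![hypMat lam q.2.1.1 q.2.1.2, hypMat lam q.2.2.1 q.2.2.2] := by
    intro q hq
    rw [hS, mem_filter, hbase] at hq
    obtain ⟨hmemb, hcond⟩ := hq
    simp only [mem_product] at hmemb
    obtain ⟨⟨⟨ha1, hb1⟩, ha2, hb2⟩, ⟨ha3, hb3⟩, ha4, hb4⟩ := hmemb
    refine ⟨?_, ?_, ?_⟩
    · intro i
      fin_cases i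
      · exact ⟨q.1.1.1, by exact_mod_cast ha1, q.1.1.2, by exact_mod_cast hb1, rfl⟩
      · exact ⟨q.1.2.1, by exact_mod_cast ha2, q.1.2.2, by exact_mod_cast hb2, rfl⟩
    · intro i
      fin_cases i
      · exact ⟨q.2.1.1, by exact_mod_cast ha3, q.2.1.2, by exact_mod_cast hb3, rfl⟩
      · exact ⟨q.2.2.1, by exact_mod_cast ha4, q.2.2.2, by exact_mod_cast hb4, rfl⟩
    · rw [altProd_two, altProd_two]
      simp only [Matrix.cons_val_zero, Matrix.cons_val_one, Matrix.head_cons]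
      exact (keyIff hlam _ _ _ _ _ _ _ _).mpr hcond
  have hsetT : setT 2 (hypSet lam (↑A) (↑B)) = S.card := by
    rw [setT, ← Nat.card_eq_finsetCard S]
    refine (Nat.card_eq_of_bijective
      (fun x => ⟨(![hypMat lam x.1.1.1.1 x.1.1.1.2, hypMat lam x.1.1.2.1 x.1.1.2.2],
         ![hypMat lam x.1.2.1.1 x.1.2.1.2, hypMat lam x.1.2.2.1 x.1.2.2.2]),
        hmem x.1 x.2⟩) ⟨?_, ?_⟩).symm
    · rintro ⟨⟨⟨⟨a1, b1⟩, a2, b2⟩, ⟨a3, b3⟩, a4, b4⟩, hx⟩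
        ⟨⟨⟨⟨c1, d1⟩, c2, d2⟩, ⟨c3, d3⟩, c4, d4⟩, hy⟩ hxy
      apply Subtype.ext
      have h := congrArg Subtype.val hxy
      rw [Prod.mk.injEq] at h
      obtain ⟨hL, hR⟩ := h
      have e1 := congrFun hL 0
      have e2 := congrFun hL 1
      have e3 := congrFun hR 0
      have e4 := congrFun hR 1
      simp only [Matrix.cons_val_zero, Matrix.cons_val_one, Matrix.head_cons] at e1 e2 e3 e4
      obtain ⟨f1, g1⟩ := hypMat_inj e1
      obtain ⟨f2, g2⟩ := hypMat_inj e2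
      obtain ⟨f3, g3⟩ := hypMat_inj e3
      obtain ⟨f4, g4⟩ := hypMat_inj e4
      simp [f1, f2, f3, f4, g1, g2, g3, g4]
    · rintro ⟨⟨t1, t2⟩, h1, h2, h3⟩
      obtain ⟨a1, ha1, b1, hb1, e1⟩ := h1 0
      obtain ⟨a2, ha2, b2, hb2, e2⟩ := h1 1
      obtain ⟨a3, ha3, b3, hb3, e3⟩ := h2 0
      obtain ⟨a4, ha4, b4, hb4, e4⟩ := h2 1
      have hqmem : (((a1, b1), (a2, b2)), ((a3, b3), (a4, b4))) ∈ S := by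
        rw [hS, mem_filter, hbase]
        constructor
        · simp only [mem_product]
          exact ⟨⟨⟨by exact_mod_cast ha1, by exact_mod_cast hb1⟩,
              by exact_mod_cast ha2, by exact_mod_cast hb2⟩,
            ⟨by exact_mod_cast ha3, by exact_mod_cast hb3⟩,
              by exact_mod_cast ha4, by exact_mod_cast hb4⟩
        · rw [altProd_two, altProd_two, e1, e2, e3, e4] at h3
          exact (keyIff hlam _ _ _ _ _ _ _ _).mp h3
      refine ⟨⟨(((a1, b1), (a2, b2)), ((a3, b3), (a4, b4))), hqmem⟩, ?_⟩
      apply Subtype.ext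
      refine Prod.ext ?_ ?_ <;> · funext i; fin_cases i <;> simp [e1.symm, e2.symm, e3.symm, e4.symm]
  -- Step 2 : counting
  set Dne : Finset ((F × F) × (F × F)) :=
    ((B ×ˢ B) ×ˢ (B ×ˢ B)).filter
      (fun t => (t.1.1 - t.1.2 = t.2.1 - t.2.2) ∧ t.1.1 ≠ t.1.2) with hDne
  set Ed : Finset ((F × F) × (F × F)) :=
    ((A ×ˢ A) ×ˢ (A ×ˢ A)).filter (fun t => t.1.1 - t.1.2 = t.2.1 - t.2.2) with hEd
  -- split S by b₁ = b₂
  have hsplit := Finset.card_filter_add_card_filter_not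
    (s := S) (p := fun q => q.1.1.2 = q.1.2.2)
  have hS2eq : S.filter (fun q => q.1.1.2 = q.1.2.2)
      = base.filter (fun q => q.1.1.2 = q.1.2.2 ∧ q.2.1.2 = q.2.2.2 ∧
          q.1.1.1 - q.1.2.1 = q.2.1.1 - q.2.2.1) := by
    rw [hS, filter_filter]
    apply filter_congr
    intro q _
    constructor
    · rintro ⟨⟨hd, (⟨hne, -⟩ | ⟨-, ha⟩)⟩, hb⟩
      · exact absurd hb hne
      · refine ⟨hb, ?_, ha⟩
        have : q.2.1.2 - q.2.2.2 = 0 := by rw [← hd, hb, sub_self]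
        exact sub_eq_zero.mp this
    · rintro ⟨hb, hb', ha⟩
      exact ⟨⟨by rw [hb, hb', sub_self, sub_self], Or.inr ⟨hb, ha⟩⟩, hb⟩
  have hS1eq : S.filter (fun q => ¬ q.1.1.2 = q.1.2.2)
      = base.filter (fun q => (q.1.1.2 - q.1.2.2 = q.2.1.2 - q.2.2.2) ∧
          q.1.1.2 ≠ q.1.2.2 ∧ q.1.1.1 = q.2.1.1 ∧ q.1.2.1 = q.2.2.1) := by
    rw [hS, filter_filter]
    apply filter_congr
    intro q _
    constructor
    · rintro ⟨⟨hd, (⟨hne, ha1, ha2⟩ | ⟨heq, -⟩)⟩, hb⟩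
      · exact ⟨hd, hne, ha1, ha2⟩
      · exact absurd heq hb
    · rintro ⟨hd, hne, ha1, ha2⟩
      exact ⟨⟨hd, Or.inl ⟨hne, ha1, ha2⟩⟩, hne⟩
  -- count the b₁ ≠ b₂ part
  have hC1 : (S.filter (fun q => ¬ q.1.1.2 = q.1.2.2)).card = A.card ^ 2 * Dne.card := by
    rw [hS1eq, sq, ← Finset.card_product, ← Finset.card_product]
    refine Finset.card_bij'
      (fun q _ => ((q.1.1.1, q.1.2.1), ((q.1.1.2, q.1.2.2), (q.2.1.2, q.2.2.2))))
      (fun p _ => (((p.1.1, p.2.1.1), (p.1.2, p.2.1.2)), ((p.1.1, p.2.2.1), (p.1.2, p.2.2.2))))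
      ?_ ?_ ?_ ?_
    · intro q hq
      rw [hbase] at hq
      simp only [mem_filter, mem_product, hDne] at hq ⊢
      obtain ⟨⟨⟨⟨ha1, hb1⟩, ha2, hb2⟩, ⟨ha3, hb3⟩, ha4, hb4⟩, hd, hne, ha13, ha24⟩ := hq
      exact ⟨⟨ha1, ha2⟩, ⟨⟨hb1, hb2⟩, hb3, hb4⟩, hd, hne⟩
    · intro p hp
      rw [hbase]
      simp only [mem_filter, mem_product, hDne] at hp ⊢
      obtain ⟨⟨hx, hy⟩, ⟨⟨hb1, hb2⟩, hb3, hb4⟩, hd, hne⟩ := hp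
      exact ⟨⟨⟨⟨hx, hb1⟩, hy, hb2⟩, ⟨hx, hb3⟩, hy, hb4⟩, hd, hne, by trivial, by trivial⟩
    · rintro ⟨⟨⟨a1, b1⟩, a2, b2⟩, ⟨a3, b3⟩, a4, b4⟩ hq
      simp only [mem_filter, mem_product] at hq
      obtain ⟨-, -, -, h13, h24⟩ := hq
      simp [h13, h24]
    · intro p _; rfl
  -- count the b₁ = b₂ part
  have hC2 : (S.filter (fun q => q.1.1.2 = q.1.2.2)).card = B.card ^ 2 * Ed.card := by
    rw [hS2eq, sq, ← Finset.card_product, ← Finset.card_product]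
    refine Finset.card_bij'
      (fun q _ => ((q.1.1.2, q.2.1.2), ((q.1.1.1, q.1.2.1), (q.2.1.1, q.2.2.1))))
      (fun p _ => (((p.2.1.1, p.1.1), (p.2.1.2, p.1.1)), ((p.2.2.1, p.1.2), (p.2.2.2, p.1.2))))
      ?_ ?_ ?_ ?_
    · intro q hq
      rw [hbase] at hq
      simp only [mem_filter, mem_product, hEd] at hq ⊢
      obtain ⟨⟨⟨⟨ha1, hb1⟩, ha2, hb2⟩, ⟨ha3, hb3⟩, ha4, hb4⟩, hb, hb', ha⟩ := hq
      exact ⟨⟨hb1, hb3⟩, ⟨⟨ha1, ha2⟩, ha3, ha4⟩, ha⟩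
    · intro p hp
      rw [hbase]
      simp only [mem_filter, mem_product, hEd] at hp ⊢
      obtain ⟨⟨hu, hv⟩, ⟨⟨ha1, ha2⟩, ha3, ha4⟩, ha⟩ := hp
      exact ⟨⟨⟨⟨ha1, hu⟩, ha2, hu⟩, ⟨ha3, hv⟩, ha4, hv⟩, by trivial, by trivial, ha⟩
    · rintro ⟨⟨⟨a1, b1⟩, a2, b2⟩, ⟨a3, b3⟩, a4, b4⟩ hq
      simp only [mem_filter, mem_product] at hq
      obtain ⟨-, hb, hb', -⟩ := hq
      simp [hb, hb']
    · intro p _; rfl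
  -- relate Dne.card to addE B
  have hDsplit : Dne.card + B.card ^ 2 = addE B := by
    have h1 := Finset.card_filter_add_card_filter_not
      (s := ((B ×ˢ B) ×ˢ (B ×ˢ B)).filter (fun t => t.1.1 - t.1.2 = t.2.1 - t.2.2))
      (p := fun t => t.1.1 = t.1.2)
    rw [filter_filter, filter_filter, diff_energy, deq_card] at h1
    have h2 : Dne =
        ((B ×ˢ B) ×ˢ (B ×ˢ B)).filter
          (fun t => (t.1.1 - t.1.2 = t.2.1 - t.2.2) ∧ ¬ t.1.1 = t.1.2) := by
      rw [hDne]
    rw [h2]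
    omega
  have hEdcard : Ed.card = addE A := by rw [hEd]; exact diff_energy A
  -- assemble
  have htotal : setT 2 (hypSet lam (↑A) (↑B))
      = A.card ^ 2 * Dne.card + B.card ^ 2 * addE A := by
    rw [hsetT, ← hsplit, hC1, hC2, hEdcard]
    ring
  constructor
  · rw [htotal]
    have : (Dne.card : ℤ) = (addE B : ℤ) - (B.card : ℤ) ^ 2 := by
      have := hDsplit
      push_cast [← this]
      ring
    push_cast [this]
    ring
  · rw [htotal]
    have hle : Dne.card ≤ addE B := by omega
    exact Nat.add_le_add_right (Nat.mul_le_mul_left _ hle) _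
end

section
/- There is an absolute constant C ≥ 1 such that for all finite sets A, D ⊂ ℝ, every integer N ≥ 1, and every real ω with |ω| ≥ 2, one has #{(a,b,d) ∈ A × (ω·[N]) × D : (a+b)(b+d) = 1} ≤ C √(|A||D|) · N · max{ |D|^{−1/2}, N^{−1/5} }. -/
/-!
Split the solutions according to which factor of `(a + b) * (b + d) = 1` has absolute value at
most `1`. Since `|ω| ≥ 2`, at most two points of `ω·[N]` lie within distance `1` of `-a`, and the
pair `(a, b)` determines `d`; so the solutions with `|a + b| ≤ 1` number at most `2|A|`, and also
at most `N|D|` because `(b, d)` determines `a`. Their number is therefore at most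
`min (2|A|) (N|D|) ≤ √(2|A||D|N)`, and symmetrically for `|b + d| ≤ 1`. This gives the bound
`3 √(|A||D|) √N`, and `√N ≤ N · N^(-1/5)`.
-/

open Finset

lemma abs_le_one_or_abs_le_one_of_mul_eq_one {α : Type*} [Ring α] [LinearOrder α]
    [IsStrictOrderedRing α] {x y : α} (h : x * y = 1) : |x| ≤ 1 ∨ |y| ≤ 1 := by
  by_contra! hxy
  have : 1 < |x| * |y| := one_lt_mul_of_lt_of_le hxy.1 hxy.2.le
  rw [← abs_mul, h, abs_one] at this
  exact this.false

lemma pairwise_abs_le_abs_sub_image_mul (s : Finset ℕ) (ω : ℝ) :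
    ((s.image fun i : ℕ => ω * (i + 1) : Finset ℝ) : Set ℝ).Pairwise
      fun b b' => |ω| ≤ |b - b'| := by
  rintro _ hb _ hb' hne
  obtain ⟨i, -, rfl⟩ := Finset.mem_image.mp hb
  obtain ⟨j, -, rfl⟩ := Finset.mem_image.mp hb'
  have hij : (1 : ℝ) ≤ |(i : ℝ) - j| := by
    have : i ≠ j := by rintro rfl; exact hne rfl
    exact_mod_cast Int.one_le_abs (sub_ne_zero.mpr (Int.ofNat_inj.not.mpr this))
  calc |ω| = |ω| * 1 := (mul_one _).symm
    _ ≤ |ω| * |(i : ℝ) - j| := mul_le_mul_of_nonneg_left hij (abs_nonneg ω)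
    _ = |ω * (i + 1) - ω * (j + 1)| := by rw [← abs_mul]; ring_nf

lemma card_filter_abs_add_le_one_le_two {B : Finset ℝ}
    (hB : (B : Set ℝ).Pairwise fun b b' => 2 ≤ |b - b'|) (c : ℝ) :
    #(B.filter fun b => |c + b| ≤ 1) ≤ 2 := by
  by_contra! h
  obtain ⟨b₁, h₁, b₂, h₂, b₃, h₃, h₁₂, h₁₃, h₂₃⟩ := Finset.two_lt_card.mp h
  simp only [Finset.mem_filter] at h₁ h₂ h₃
  have d₁₂ := le_abs.mp (hB h₁.1 h₂.1 h₁₂)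
  have d₁₃ := le_abs.mp (hB h₁.1 h₃.1 h₁₃)
  have d₂₃ := le_abs.mp (hB h₂.1 h₃.1 h₂₃)
  have a₁ := abs_le.mp h₁.2
  have a₂ := abs_le.mp h₂.2
  have a₃ := abs_le.mp h₃.2
  rcases d₁₂ with _ | _ <;> rcases d₁₃ with _ | _ <;> rcases d₂₃ with _ | _ <;> linarith

lemma card_filter_product_abs_add_le_one_le {A B : Finset ℝ}
    (hB : (B : Set ℝ).Pairwise fun b b' => 2 ≤ |b - b'|) :
    #((A ×ˢ B).filter fun p => |p.1 + p.2| ≤ 1) ≤ 2 * #A := by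
  refine Finset.card_le_mul_card_image_of_maps_to (f := Prod.fst)
    (fun p hp => (Finset.mem_product.mp (Finset.mem_filter.mp hp).1).1) 2 fun a _ => ?_
  refine le_trans (Finset.card_le_card_of_injOn Prod.snd ?_ ?_)
    (card_filter_abs_add_le_one_le_two hB a)
  · intro p hp
    rw [Finset.mem_coe, Finset.mem_filter, Finset.mem_filter, Finset.mem_product] at hp
    obtain ⟨⟨⟨-, hb⟩, hab⟩, rfl⟩ := hp
    exact Finset.mem_filter.mpr ⟨hb, hab⟩
  · intro p hp q hq hpq
    rw [Finset.mem_coe, Finset.mem_filter] at hp hq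
    exact Prod.ext (hp.2.trans hq.2.symm) hpq

noncomputable def solutions (A B D : Finset ℝ) : Finset ((ℝ × ℝ) × ℝ) :=
  ((A ×ˢ B) ×ˢ D).filter fun t => (t.1.1 + t.1.2) * (t.1.2 + t.2) = 1

section solutions

variable {A B D : Finset ℝ}

lemma mem_solutions {t : (ℝ × ℝ) × ℝ} :
    t ∈ solutions A B D ↔
      t.1.1 ∈ A ∧ t.1.2 ∈ B ∧ t.2 ∈ D ∧ (t.1.1 + t.1.2) * (t.1.2 + t.2) = 1 := by
  simp only [solutions, Finset.mem_filter, Finset.mem_product, and_assoc]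

lemma injOn_fst_solutions : Set.InjOn Prod.fst (solutions A B D : Set ((ℝ × ℝ) × ℝ)) := by
  intro t ht t' ht' h
  have e := (mem_solutions.mp ht).2.2.2
  have e' := (mem_solutions.mp ht').2.2.2
  rw [← h] at e'
  have hu : t.1.1 + t.1.2 ≠ 0 := left_ne_zero_of_mul_eq_one e
  exact Prod.ext h (add_left_cancel (mul_left_cancel₀ hu (e.trans e'.symm)))

lemma injOn_snd_solutions :
    Set.InjOn (fun t => (t.1.2, t.2)) (solutions A B D : Set ((ℝ × ℝ) × ℝ)) := by
  intro t ht t' ht' h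
  obtain ⟨hb, hd⟩ := Prod.mk.inj h
  have e := (mem_solutions.mp ht).2.2.2
  have e' := (mem_solutions.mp ht').2.2.2
  rw [← hb, ← hd] at e'
  have hu : t.1.2 + t.2 ≠ 0 := right_ne_zero_of_mul_eq_one e
  exact Prod.ext (Prod.ext (add_right_cancel (mul_right_cancel₀ hu (e.trans e'.symm))) hb) hd

lemma card_solutions_le_card_mul_card : #(solutions A B D) ≤ #B * #D := by
  rw [← Finset.card_product]
  refine Finset.card_le_card_of_injOn _ (fun t ht => ?_) injOn_snd_solutions
  obtain ⟨-, hb, hd, -⟩ := mem_solutions.mp ht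
  exact Finset.mem_product.mpr ⟨hb, hd⟩

lemma card_filter_solutions_abs_add_le_one_le
    (hB : (B : Set ℝ).Pairwise fun b b' => 2 ≤ |b - b'|) :
    #((solutions A B D).filter fun t => |t.1.1 + t.1.2| ≤ 1) ≤ 2 * #A := by
  refine le_trans (Finset.card_le_card_of_injOn Prod.fst (fun t ht => ?_)
    (injOn_fst_solutions.mono (Finset.filter_subset _ _))) (card_filter_product_abs_add_le_one_le hB)
  simp only [Finset.mem_coe, Finset.mem_filter, mem_solutions] at ht
  exact Finset.mem_filter.mpr ⟨Finset.mem_product.mpr ⟨ht.1.1, ht.1.2.1⟩, ht.2⟩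

lemma card_filter_solutions_abs_add_le_one_le_sqrt
    (hB : (B : Set ℝ).Pairwise fun b b' => 2 ≤ |b - b'|) :
    (#((solutions A B D).filter fun t => |t.1.1 + t.1.2| ≤ 1) : ℝ) ≤
      √(2 * (#A * #D) * #B) := by
  set n := #((solutions A B D).filter fun t => |t.1.1 + t.1.2| ≤ 1)
  have h₁ : n ≤ 2 * #A := card_filter_solutions_abs_add_le_one_le hB
  have h₂ : n ≤ #B * #D :=
    (Finset.card_le_card (Finset.filter_subset _ _)).trans card_solutions_le_card_mul_card
  have : n ^ 2 ≤ 2 * (#A * #D) * #B :=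
    (sq n).le.trans ((Nat.mul_le_mul h₁ h₂).trans_eq (by ring))
  rw [Real.le_sqrt (Nat.cast_nonneg _) (by positivity)]
  exact_mod_cast this

lemma card_filter_solutions_abs_add_le_one_eq_swap :
    #((solutions A B D).filter fun t => |t.1.2 + t.2| ≤ 1) =
      #((solutions D B A).filter fun t => |t.1.1 + t.1.2| ≤ 1) := by
  let swap : (ℝ × ℝ) × ℝ → (ℝ × ℝ) × ℝ := fun t => ((t.2, t.1.2), t.1.1)
  refine Finset.card_nbij' swap swap ?_ ?_ (fun _ _ => rfl) (fun _ _ => rfl) <;>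
  · intro t ht
    simp only [Finset.mem_coe, Finset.mem_filter, mem_solutions, swap] at ht ⊢
    obtain ⟨⟨ha, hb, hd, e⟩, hab⟩ := ht
    refine ⟨⟨hd, hb, ha, ?_⟩, ?_⟩
    · rw [← e]; ring
    · rwa [add_comm]

theorem card_solutions_le (hB : (B : Set ℝ).Pairwise fun b b' => 2 ≤ |b - b'|) :
    (#(solutions A B D) : ℝ) ≤ 2 * √2 * √(#A * #D) * √(#B : ℝ) := by
  have hsplit : solutions A B D =
      (solutions A B D).filter fun t => |t.1.1 + t.1.2| ≤ 1 ∨ |t.1.2 + t.2| ≤ 1 :=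
    (Finset.filter_true_of_mem fun t ht =>
      abs_le_one_or_abs_le_one_of_mul_eq_one (mem_solutions.mp ht).2.2.2).symm
  have hab := card_filter_solutions_abs_add_le_one_le_sqrt (A := A) (D := D) hB
  have hbd := card_filter_solutions_abs_add_le_one_le_sqrt (A := D) (D := A) hB
  rw [← card_filter_solutions_abs_add_le_one_eq_swap, mul_comm (#D : ℝ)] at hbd
  have hcard : #(solutions A B D) ≤ #((solutions A B D).filter fun t => |t.1.1 + t.1.2| ≤ 1) +
      #((solutions A B D).filter fun t => |t.1.2 + t.2| ≤ 1) := by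
    conv_lhs => rw [hsplit, Finset.filter_or]
    exact Finset.card_union_le _ _
  calc (#(solutions A B D) : ℝ)
      ≤ #((solutions A B D).filter fun t => |t.1.1 + t.1.2| ≤ 1) +
          #((solutions A B D).filter fun t => |t.1.2 + t.2| ≤ 1) := by exact_mod_cast hcard
    _ ≤ 2 * √(2 * (#A * #D) * #B) := by linarith
    _ = 2 * √2 * √(#A * #D) * √(#B : ℝ) := by
        have hAD : (0 : ℝ) ≤ 2 * (#A * #D) :=
          mul_nonneg zero_le_two (mul_nonneg (Nat.cast_nonneg _) (Nat.cast_nonneg _))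
        rw [Real.sqrt_mul hAD, Real.sqrt_mul zero_le_two]
        ring

end solutions

lemma sqrt_le_mul_rpow_neg_one_fifth {x : ℝ} (hx : 1 ≤ x) : √x ≤ x * x ^ (-(1 : ℝ) / 5) := by
  calc √x = x ^ (1 / 2 : ℝ) := Real.sqrt_eq_rpow x
    _ ≤ x ^ (1 + -(1 : ℝ) / 5) := Real.rpow_le_rpow_of_exponent_le hx (by norm_num)
    _ = x * x ^ (-(1 : ℝ) / 5) := by rw [Real.rpow_add (by linarith), Real.rpow_one]

theorem stmt13 :
    ∃ C : ℝ, 1 ≤ C ∧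
      ∀ (A D : Finset ℝ) (N : ℕ), 1 ≤ N → ∀ ω : ℝ, 2 ≤ |ω| →
        (((((A ×ˢ ((Finset.range N).image fun i : ℕ => ω * (i + 1))) ×ˢ D).filter
              fun t => (t.1.1 + t.1.2) * (t.1.2 + t.2) = 1).card : ℝ)) ≤
          C * Real.sqrt ((A.card : ℝ) * D.card) * N *
            max ((D.card : ℝ) ^ (-(1 : ℝ) / 2)) ((N : ℝ) ^ (-(1 : ℝ) / 5)) := by
  refine ⟨3, by norm_num, fun A D N hN ω hω => ?_⟩
  set B := (Finset.range N).image fun i : ℕ => ω * (i + 1)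
  have hB : (B : Set ℝ).Pairwise fun b b' => 2 ≤ |b - b'| :=
    (pairwise_abs_le_abs_sub_image_mul _ ω).mono' fun _ _ h => hω.trans h
  have hBN : (#B : ℝ) ≤ N := by exact_mod_cast Finset.card_image_le.trans (Finset.card_range N).le
  have hsqrt2 : 2 * √2 ≤ 3 := by
    nlinarith [Real.sq_sqrt (show (0 : ℝ) ≤ 2 by norm_num), Real.sqrt_nonneg 2]
  have hN' : √(N : ℝ) ≤ N * (N : ℝ) ^ (-(1 : ℝ) / 5) :=
    sqrt_le_mul_rpow_neg_one_fifth (by exact_mod_cast hN)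
  calc (#(solutions A B D) : ℝ)
      ≤ 2 * √2 * √(#A * #D) * √(#B : ℝ) := card_solutions_le hB
    _ ≤ 3 * √(#A * #D) * (N * (N : ℝ) ^ (-(1 : ℝ) / 5)) := by
        gcongr
        exact (Real.sqrt_le_sqrt hBN).trans hN'
    _ ≤ 3 * √(#A * #D) * N * max ((#D : ℝ) ^ (-(1 : ℝ) / 2)) ((N : ℝ) ^ (-(1 : ℝ) / 5)) := by
        rw [mul_assoc _ (N : ℝ)]
        gcongr
        exact le_max_right _ _
end
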